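/- arXiv:2205.04984 — 3 statements merged into one kernel-verified Lean document; each statement's English description precedes it below -/
import Mathlib

section
/- Fix an integer c ≥ 2 and let G be a finite double tree with no c-balanced double tree decomposition that has the minimum number of vertices among all such double trees. Let v be a poor 3-vertex of G with big neighbours x, y and small neighbour s, and let G = T1 ⊔ T2 be any double tree decomposition with vs ∈ E(T1). Then: (i) exactly one of the edges vx, vy lies in E(T1); (ii) if vy ∈ E(T2), then swapping vy yields the double tree decomposition G = T1' ⊔ T2' with E(T1') = E(T1) - vx + vy and E(T2') = E(T2) + vx - vy; (iii) the path from x to y in T1 does not contain s. -/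
/-- A multigraph without loops: edges `E` with an endpoint map into unordered
pairs of vertices, no edge being a loop. -/
structure Multigraph (V : Type*) (E : Type*) where
  ends : E → Sym2 V
  loopless : ∀ e, ¬ (ends e).IsDiag

namespace Multigraph

variable {V E : Type*}

/-- `a` and `b` are joined by an edge belonging to the edge set `S`. -/
def Adj (G : Multigraph V E) (S : Set E) (a b : V) : Prop :=
  ∃ e ∈ S, G.ends e = s(a, b)

/-- Reachability in the spanning subgraph with edge set `S`. -/
def Reachable (G : Multigraph V E) (S : Set E) (a b : V) : Prop :=
  Relation.ReflTransGen (G.Adj S) a b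

/-- The spanning subgraph with edge set `S` is connected. -/
def Connected (G : Multigraph V E) (S : Set E) : Prop :=
  ∀ a b : V, G.Reachable S a b

/-- The spanning subgraph with edge set `S` is acyclic: every edge of `S`
is a bridge of `S`. -/
def Acyclic (G : Multigraph V E) (S : Set E) : Prop :=
  ∀ e ∈ S, ∀ a b : V, G.ends e = s(a, b) → ¬ G.Reachable (S \ {e}) a b

/-- `S` is the edge set of a spanning tree: connected and acyclic. -/
def IsSpanningTree (G : Multigraph V E) (S : Set E) : Prop :=
  G.Connected S ∧ G.Acyclic S

/-- The edges of `S` incident to `v`. -/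
def incEdges (G : Multigraph V E) (S : Set E) (v : V) : Set E :=
  {e ∈ S | v ∈ G.ends e}

/-- The degree of `v` in the spanning subgraph with edge set `S`. -/
noncomputable def deg (G : Multigraph V E) (S : Set E) (v : V) : ℕ :=
  (G.incEdges S v).ncard

/-- `T1, T2` form a double tree decomposition of `G`: they partition the
edges of `G` and are both spanning trees. -/
def IsDTD (G : Multigraph V E) (T1 T2 : Set E) : Prop :=
  T1 ∪ T2 = Set.univ ∧ Disjoint T1 T2 ∧ G.IsSpanningTree T1 ∧ G.IsSpanningTree T2

/-- `G` is a double tree: the edge-disjoint union of two spanning trees. -/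
def IsDoubleTree (G : Multigraph V E) : Prop :=
  ∃ T1 T2, G.IsDTD T1 T2

/-- A decomposition into two spanning subgraphs is `c`-balanced if at each
vertex the two degrees differ by at most `c`. -/
def Balanced (G : Multigraph V E) (c : ℕ) (S1 S2 : Set E) : Prop :=
  ∀ v : V, |(G.deg S1 v : ℤ) - (G.deg S2 v : ℤ)| ≤ (c : ℤ)

end Multigraph

namespace Multigraph

variable {V E : Type*}

/-- `G` admits no `c`-balanced double tree decomposition. -/
def NoBalancedDTD (c : ℕ) (G : Multigraph V E) : Prop :=
  ¬ ∃ T1 T2 : Set E, G.IsDTD T1 T2 ∧ G.Balanced c T1 T2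

/-- `v` is big: its degree exceeds `c + 2`. -/
def Big (G : Multigraph V E) (c : ℕ) (v : V) : Prop :=
  c + 2 < G.deg Set.univ v

/-- `v` is small: its degree is at most `c + 2`. -/
def Small (G : Multigraph V E) (c : ℕ) (v : V) : Prop :=
  G.deg Set.univ v ≤ c + 2

/-- `u` and `z` are joined by a double edge. -/
def DoubleEdge (G : Multigraph V E) (u z : V) : Prop :=
  ∃ e1 e2 : E, e1 ≠ e2 ∧ G.ends e1 = s(u, z) ∧ G.ends e2 = s(u, z)

/-- `u` is a bad 3-vertex: it has degree 3, a small neighbour, and is joined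
to a big vertex by a double edge. -/
def Bad3 (G : Multigraph V E) (c : ℕ) (u : V) : Prop :=
  G.deg Set.univ u = 3 ∧
  (∃ w, G.Adj Set.univ u w ∧ G.Small c w) ∧
  (∃ z, G.DoubleEdge u z ∧ G.Big c z)

/-- `u` is a poor 3-vertex: it has degree 3 and three distinct neighbours,
two big and one small. -/
def Poor3 (G : Multigraph V E) (c : ℕ) (u : V) : Prop :=
  G.deg Set.univ u = 3 ∧
  ∃ x y s : V, x ≠ y ∧ x ≠ s ∧ y ≠ s ∧
    G.Adj Set.univ u x ∧ G.Adj Set.univ u y ∧ G.Adj Set.univ u s ∧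
    G.Big c x ∧ G.Big c y ∧ G.Small c s

end Multigraph

/-!
Everything rests on one fact: no double tree decomposition of `G` puts `es` in one tree and both
`ex` and `ey` in the other. Given such a decomposition, contract `ex` and delete `es`: `v`
disappears, `ey` becomes an edge `xy`, and both trees survive, so the result is a double tree on
fewer vertices. By minimality it has a `c`-balanced decomposition. Putting `ex` into the tree of
`xy` and `es` into the other tree lifts it to `G`; degrees away from `v` and `s` do not change, and
the small vertices `v` and `s` are balanced in every decomposition.

If now `ea ∈ T1` and `eb ∈ T2`, where `{ea, eb} = {ex, ey}` joins `v` to `{a, b} = {x, y}`, then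
`v` and `b` are disconnected in `T1 - ea`: otherwise `v` reaches `b` through `es`, and exchanging
`es` for `eb` would separate `es` from `ex, ey`. This makes `T1 - ea + eb` a tree, which gives
(ii), and it forces the `a`-`b` path of `T1` to avoid `ea`, hence `v` and `s`, which gives (iii).
-/

namespace Multigraph

variable {V E : Type*} {G : Multigraph V E}

section Reachability

variable {S T : Set E} {a b d p q : V} {e f : E}

lemma exists_ends_eq (G : Multigraph V E) (e : E) : ∃ p q, G.ends e = s(p, q) := by
  induction G.ends e using Sym2.ind with | _ p q => exact ⟨p, q, rfl⟩

lemma ne_of_ends_eq (h : G.ends e = s(a, b)) : a ≠ b := fun hab =>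
  G.loopless e (by rw [h, hab]; exact Sym2.mk_isDiag_iff.mpr rfl)

lemma ne_of_ends_eq_of_ne {v : V} (he : G.ends e = s(v, a)) (hf : G.ends f = s(v, b))
    (hab : a ≠ b) : e ≠ f := fun h => hab (Sym2.congr_right.mp (he.symm.trans (h ▸ hf)))

lemma Adj.symm (h : G.Adj S a b) : G.Adj S b a := by
  obtain ⟨e, he, hab⟩ := h
  exact ⟨e, he, by rw [hab, Sym2.eq_swap]⟩

lemma Adj.reachable (h : G.Adj S a b) : G.Reachable S a b := .single h

lemma Reachable.refl (a : V) : G.Reachable S a a := Relation.ReflTransGen.refl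

lemma Reachable.trans (h : G.Reachable S a b) (h' : G.Reachable S b d) : G.Reachable S a d :=
  Relation.ReflTransGen.trans h h'

lemma Reachable.symm (h : G.Reachable S a b) : G.Reachable S b a := by
  induction h with
  | refl => exact .refl a
  | tail _ hbd ih => exact hbd.symm.reachable.trans ih

lemma Reachable.mono (hST : S ⊆ T) (h : G.Reachable S a b) : G.Reachable T a b :=
  Relation.ReflTransGen.mono (fun _ _ ⟨e, he, hq⟩ => ⟨e, hST he, hq⟩) _ _ h

lemma Reachable.exists_mem_ends (h : G.Reachable S a b) (hab : a ≠ b) :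
    ∃ e ∈ S, a ∈ G.ends e := by
  rcases Relation.ReflTransGen.cases_head h with rfl | ⟨d, ⟨e, he, hq⟩, -⟩
  · exact absurd rfl hab
  · exact ⟨e, he, by rw [hq]; exact Sym2.mem_mk_left a d⟩

lemma Reachable.eq_of_isolated (h : G.Reachable S a b) (ha : ∀ e ∈ S, a ∉ G.ends e) :
    a = b := by
  by_contra hab
  obtain ⟨e, he, hae⟩ := h.exists_mem_ends hab
  exact ha e he hae

lemma Reachable.diff_singleton_or (hpq : G.ends e = s(p, q)) (h : G.Reachable S a b) :
    G.Reachable (S \ {e}) a b ∨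
      (G.Reachable (S \ {e}) a p ∧ G.Reachable (S \ {e}) q b) ∨
      (G.Reachable (S \ {e}) a q ∧ G.Reachable (S \ {e}) p b) := by
  induction h using Relation.ReflTransGen.head_induction_on with
  | refl => exact .inl (.refl b)
  | @head a d had _ ih =>
    obtain ⟨f, hf, hq⟩ := had
    by_cases hfe : f = e
    · subst hfe
      rw [hpq] at hq
      rcases Sym2.eq_iff.mp hq with ⟨rfl, rfl⟩ | ⟨rfl, rfl⟩ <;>
        rcases ih with h1 | ⟨h1, h2⟩ | ⟨h1, h2⟩
      · exact .inr (.inl ⟨.refl _, h1⟩)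
      · exact .inl (h1.symm.trans h2)
      · exact .inl h2
      · exact .inr (.inr ⟨.refl _, h1⟩)
      · exact .inl h2
      · exact .inl (h1.symm.trans h2)
    · have hstep : G.Reachable (S \ {e}) a d := Adj.reachable ⟨f, ⟨hf, hfe⟩, hq⟩
      rcases ih with h1 | ⟨h1, h2⟩ | ⟨h1, h2⟩
      · exact .inl (hstep.trans h1)
      · exact .inr (.inl ⟨hstep.trans h1, h2⟩)
      · exact .inr (.inr ⟨hstep.trans h1, h2⟩)

lemma Reachable.diff_leaf (hleaf : ∀ f ∈ S, p ∈ G.ends f → f = e) (he : G.ends e = s(p, q))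
    (h : G.Reachable S a b) (ha : a ≠ p) (hb : b ≠ p) : G.Reachable (S \ {e}) a b := by
  have hiso : ∀ f ∈ S \ {e}, p ∉ G.ends f := fun f hf hpf => hf.2 (hleaf f hf.1 hpf)
  rcases h.diff_singleton_or he with h | ⟨h, -⟩ | ⟨-, h⟩
  · exact h
  · exact absurd (h.symm.eq_of_isolated hiso).symm ha
  · exact absurd (h.eq_of_isolated hiso) hb.symm

lemma Reachable.filter_notMem_ends (h : G.Reachable S a b) (hd : ¬ G.Reachable S a d) :
    G.Reachable {e ∈ S | d ∉ G.ends e} a b := by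
  induction h using Relation.ReflTransGen.head_induction_on with
  | refl => exact .refl _
  | @head a b' hab _ ih =>
    obtain ⟨e, he, hq⟩ := hab
    have hab' : G.Reachable S a b' := Adj.reachable ⟨e, he, hq⟩
    have hde : d ∉ G.ends e := by
      rw [hq, Sym2.mem_iff]
      rintro (rfl | rfl)
      exacts [hd (.refl _), hd hab']
    exact (Adj.reachable (S := {e ∈ S | d ∉ G.ends e}) ⟨e, ⟨he, hde⟩, hq⟩).trans
      (ih fun h => hd (hab'.trans h))

lemma connected_of_reachable_of_ne {v x : V} (hxv : x ≠ v) (hvx : G.Reachable S v x)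
    (h : ∀ a b : {w // w ≠ v}, G.Reachable S a b) : G.Connected S := fun a b => by
  by_cases ha : a = v <;> by_cases hb : b = v
  · rw [ha, hb]; exact .refl _
  · subst ha; exact hvx.trans (h ⟨x, hxv⟩ ⟨b, hb⟩)
  · subst hb; exact (h ⟨a, ha⟩ ⟨x, hxv⟩).trans hvx.symm
  · exact h ⟨a, ha⟩ ⟨b, hb⟩

lemma IsSpanningTree.exchange (hT : G.IsSpanningTree T) (hf : f ∉ T)
    (hfab : G.ends f = s(a, b)) (hsep : ¬ G.Reachable (T \ {e}) a b) :
    G.IsSpanningTree (T \ {e} ∪ {f}) := by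
  obtain ⟨p, q, hpq⟩ := G.exists_ends_eq e
  set U := T \ {e} ∪ {f} with hU
  have hsub : T \ {e} ⊆ U := Set.subset_union_left
  have hfab' : G.Reachable U a b := Adj.reachable ⟨f, .inr rfl, hfab⟩
  have hpq' : G.Reachable U p q := by
    rcases (hT.1 a b).diff_singleton_or hpq with h | ⟨h1, h2⟩ | ⟨h1, h2⟩
    · exact absurd h hsep
    · exact ((h1.symm.mono hsub).trans hfab').trans (h2.symm.mono hsub)
    · exact ((h2.mono hsub).trans hfab'.symm).trans (h1.mono hsub)
  refine ⟨fun w z => ?_, ?_⟩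
  · rcases (hT.1 w z).diff_singleton_or hpq with h | ⟨h1, h2⟩ | ⟨h1, h2⟩
    · exact h.mono hsub
    · exact ((h1.mono hsub).trans hpq').trans (h2.mono hsub)
    · exact ((h1.mono hsub).trans hpq'.symm).trans (h2.mono hsub)
  rintro g (hg | rfl) r t hrt hreach
  · have hsub' : (U \ {g}) \ {f} ⊆ (T \ {e}) \ {g} := by
      rintro k ⟨⟨hk | hk, hkg⟩, hkf⟩
      exacts [⟨hk, hkg⟩, absurd hk hkf]
    have hsub1 : (T \ {e}) \ {g} ⊆ T \ {e} := Set.sdiff_subset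
    have hsub2 : (T \ {e}) \ {g} ⊆ T \ {g} := Set.sdiff_subset_sdiff_left Set.sdiff_subset
    have hrt' : G.Reachable (T \ {e}) r t := Adj.reachable ⟨g, hg, hrt⟩
    rcases hreach.diff_singleton_or hfab with h | ⟨h1, h2⟩ | ⟨h1, h2⟩
    · exact hT.2 g hg.1 r t hrt ((h.mono hsub').mono hsub2)
    · exact hsep ((((h1.mono hsub').mono hsub1).symm.trans hrt').trans
        ((h2.mono hsub').mono hsub1).symm)
    · exact hsep ((((h2.mono hsub').mono hsub1).trans hrt'.symm).trans
        ((h1.mono hsub').mono hsub1))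
  · rw [hU, Set.union_sdiff_right, Set.sdiff_singleton_eq_self fun h => hf h.1] at hreach
    rw [hfab] at hrt
    rcases Sym2.eq_iff.mp hrt with ⟨rfl, rfl⟩ | ⟨rfl, rfl⟩
    exacts [hsep hreach, hsep hreach.symm]

lemma IsDTD.symm (h : G.IsDTD T S) : G.IsDTD S T :=
  ⟨by rw [Set.union_comm, h.1], h.2.1.symm, h.2.2.2, h.2.2.1⟩

lemma IsDTD.notMem_right (h : G.IsDTD S T) (he : e ∈ S) : e ∉ T :=
  Set.disjoint_left.mp h.2.1 he

lemma IsDTD.mem_right (h : G.IsDTD S T) (he : e ∉ S) : e ∈ T :=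
  (Set.eq_univ_iff_forall.mp h.1 e).resolve_left he

lemma IsDTD.exchange (h : G.IsDTD S T) (he : e ∈ S) (hf : f ∈ T)
    (hfab : G.ends f = s(a, b)) (hepq : G.ends e = s(p, q))
    (hS : ¬ G.Reachable (S \ {e}) a b) (hT : ¬ G.Reachable (T \ {f}) p q) :
    G.IsDTD (S \ {e} ∪ {f}) (T \ {f} ∪ {e}) := by
  have hfS : f ∉ S := h.symm.notMem_right hf
  have heT : e ∉ T := h.notMem_right he
  refine ⟨?_, ?_, h.2.2.1.exchange hfS hfab hS, h.2.2.2.exchange heT hepq hT⟩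
  · refine Set.eq_univ_iff_forall.mpr fun g => ?_
    by_cases hge : g = e; · exact .inr (.inr hge)
    by_cases hgf : g = f; · exact .inl (.inr hgf)
    by_cases hgS : g ∈ S
    exacts [.inl (.inl ⟨hgS, hge⟩), .inr (.inl ⟨h.mem_right hgS, hgf⟩)]
  · rw [Set.disjoint_left]
    rintro g (⟨hgS, hgne⟩ | hgf) (⟨hgT, hgnf⟩ | hge)
    · exact h.notMem_right hgS hgT
    · exact hgne hge
    · exact hgnf hgf
    · exact heT ((Set.mem_singleton_iff.mp hge) ▸ (Set.mem_singleton_iff.mp hgf).symm ▸ hf)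

end Reachability

section Degree

variable {S T : Set E} {w : V}

lemma deg_eq_zero_of_forall_notMem (h : ∀ e ∈ S, w ∉ G.ends e) : G.deg S w = 0 := by
  have hinc : G.incEdges S w = ∅ := Set.eq_empty_of_forall_notMem fun e he => h e he.1 he.2
  rw [deg, hinc, Set.ncard_empty]

lemma deg_eq_one_of_forall_mem_ends_iff {e : E} (he : e ∈ S)
    (h : ∀ f ∈ S, w ∈ G.ends f ↔ f = e) : G.deg S w = 1 := by
  have hinc : G.incEdges S w = {e} := by
    ext f
    exact ⟨fun hf => (h f hf.1).mp hf.2, fun hf => ⟨hf ▸ he, (h f (hf ▸ he)).mpr hf⟩⟩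
  rw [deg, hinc, Set.ncard_singleton]

lemma Balanced.symm {c : ℕ} (h : G.Balanced c S T) : G.Balanced c T S := fun w => by
  rw [abs_sub_comm]; exact h w

variable [Finite E]

lemma deg_union (h : Disjoint S T) (w : V) : G.deg (S ∪ T) w = G.deg S w + G.deg T w := by
  have hinc : G.incEdges (S ∪ T) w = G.incEdges S w ∪ G.incEdges T w := by
    ext e; simp only [incEdges, Set.mem_union, Set.mem_ofPred_eq, or_and_right]
  rw [deg, hinc, Set.ncard_union_eq (h.mono (fun _ he => he.1) (fun _ he => he.1))]
  rfl

lemma IsDTD.deg_add_deg (h : G.IsDTD S T) (w : V) :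
    G.deg S w + G.deg T w = G.deg Set.univ w := by
  rw [← deg_union h.2.1, h.1]

lemma IsSpanningTree.deg_pos [Nontrivial V] (h : G.IsSpanningTree S) (w : V) :
    0 < G.deg S w := by
  obtain ⟨u, hu⟩ := exists_ne w
  obtain ⟨e, he, hw⟩ := (h.1 w u).exists_mem_ends hu.symm
  exact (Set.ncard_pos).mpr ⟨e, he, hw⟩

/-- Each of the two trees has an edge at `w`. -/
lemma IsDTD.abs_sub_deg_le [Nontrivial V] {c : ℕ} (h : G.IsDTD S T)
    (hw : G.Small c w) : |(G.deg S w : ℤ) - G.deg T w| ≤ c := by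
  have hsum := h.deg_add_deg w
  have hS := h.2.2.1.deg_pos w
  have hT := h.2.2.2.deg_pos w
  unfold Small at hw
  rw [abs_le]
  constructor <;> omega

end Degree

section Relabel

variable {V' E' : Type*} (σ : V ≃ V') (τ : E ≃ E')

def relabel (G : Multigraph V E) : Multigraph V' E' where
  ends f := Sym2.map σ (G.ends (τ.symm f))
  loopless f := by rw [Sym2.isDiag_map σ.injective]; exact G.loopless _

variable {σ τ} {S T : Set E} {a b : V} {c : ℕ}

@[simp]
lemma relabel_ends (e : E) : (G.relabel σ τ).ends (τ e) = Sym2.map σ (G.ends e) := by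
  simp [relabel]

lemma adj_relabel_iff : (G.relabel σ τ).Adj (τ '' S) (σ a) (σ b) ↔ G.Adj S a b := by
  constructor
  · rintro ⟨_, ⟨e, he, rfl⟩, h⟩
    rw [relabel_ends, ← Sym2.map_mk] at h
    exact ⟨e, he, Sym2.map.injective σ.injective h⟩
  · rintro ⟨e, he, h⟩
    exact ⟨τ e, Set.mem_image_of_mem τ he, by rw [relabel_ends, h, Sym2.map_mk]⟩

lemma reachable_relabel_iff :
    (G.relabel σ τ).Reachable (τ '' S) (σ a) (σ b) ↔ G.Reachable S a b := by
  constructor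
  · intro h
    have := Relation.ReflTransGen.lift σ.symm (p := G.Adj S) (fun a' b' h' => by
      rw [← σ.apply_symm_apply a', ← σ.apply_symm_apply b'] at h'
      exact adj_relabel_iff.mp h') _ _ h
    simpa [Function.onFun, Reachable] using this
  · exact Relation.ReflTransGen.lift σ (fun _ _ h => adj_relabel_iff.mpr h) a b

lemma isSpanningTree_relabel_iff :
    (G.relabel σ τ).IsSpanningTree (τ '' S) ↔ G.IsSpanningTree S := by
  have hdiff : ∀ e, τ '' S \ {τ e} = τ '' (S \ {e}) := fun e => by
    rw [Set.image_sdiff τ.injective, Set.image_singleton]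
  unfold IsSpanningTree Connected Acyclic
  refine and_congr ?_ ?_
  · simp only [σ.surjective.forall, reachable_relabel_iff]
  · simp only [τ.surjective.forall, σ.surjective.forall, τ.injective.mem_set_image, relabel_ends,
      ← Sym2.map_mk, (Sym2.map.injective σ.injective).eq_iff, hdiff, reachable_relabel_iff]

lemma deg_relabel (w : V) : (G.relabel σ τ).deg (τ '' S) (σ w) = G.deg S w := by
  have hinc : (G.relabel σ τ).incEdges (τ '' S) (σ w) = τ '' G.incEdges S w := by
    ext f
    obtain ⟨e, rfl⟩ := τ.surjective f
    simp only [incEdges, Set.mem_ofPred_eq, τ.injective.mem_set_image, relabel_ends,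
      Sym2.mem_map, σ.injective.eq_iff, exists_eq_right]
  rw [deg, hinc, Set.ncard_image_of_injective _ τ.injective, deg]

lemma isDTD_relabel_iff : (G.relabel σ τ).IsDTD (τ '' S) (τ '' T) ↔ G.IsDTD S T := by
  unfold IsDTD
  rw [isSpanningTree_relabel_iff, isSpanningTree_relabel_iff, ← Set.image_union,
    Set.disjoint_image_iff τ.injective, ← Set.image_univ_of_surjective τ.surjective,
    τ.injective.image_injective.eq_iff]

lemma balanced_relabel_iff :
    (G.relabel σ τ).Balanced c (τ '' S) (τ '' T) ↔ G.Balanced c S T := by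
  simp only [Balanced, σ.surjective.forall, deg_relabel]

lemma IsDoubleTree.relabel (h : G.IsDoubleTree) : (G.relabel σ τ).IsDoubleTree := by
  obtain ⟨S, T, hST⟩ := h
  exact ⟨τ '' S, τ '' T, isDTD_relabel_iff.mpr hST⟩

lemma NoBalancedDTD.relabel (h : G.NoBalancedDTD c) : (G.relabel σ τ).NoBalancedDTD c := by
  rintro ⟨S', T', hST, hbal⟩
  rw [← τ.image_preimage S', ← τ.image_preimage T'] at hST hbal
  exact h ⟨_, _, isDTD_relabel_iff.mp hST, balanced_relabel_iff.mp hbal⟩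

lemma le_card_of_minimal [Finite V] [Finite E] {n : ℕ}
    (hmin : ∀ (n' m' : ℕ) (G' : Multigraph (Fin n') (Fin m')),
      G'.IsDoubleTree → G'.NoBalancedDTD c → n ≤ n')
    (hG : G.IsDoubleTree) (hbal : G.NoBalancedDTD c) : n ≤ Nat.card V :=
  hmin _ _ _ (hG.relabel (σ := Finite.equivFin V) (τ := Finite.equivFin E)) hbal.relabel

end Relabel

section Merge

variable [DecidableEq V] {v x a b p q : V}

def mergeInto (hxv : x ≠ v) (w : V) : {w // w ≠ v} :=
  if h : w = v then ⟨x, hxv⟩ else ⟨w, h⟩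

variable (hxv : x ≠ v)

lemma mergeInto_of_ne {w : V} (hw : w ≠ v) : mergeInto hxv w = ⟨w, hw⟩ := dif_neg hw

lemma mergeInto_self : mergeInto hxv v = ⟨x, hxv⟩ := dif_pos rfl

@[simp]
lemma mergeInto_val (w : {w // w ≠ v}) : mergeInto hxv w.val = w := mergeInto_of_ne hxv w.2

lemma mergeInto_eq_mk_iff {w : V} (hw : w ≠ v) :
    mergeInto hxv a = ⟨w, hw⟩ ↔ a = w ∨ (a = v ∧ w = x) := by
  by_cases ha : a = v
  · subst ha
    rw [mergeInto_self, Subtype.mk.injEq]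
    exact ⟨fun h => .inr ⟨rfl, h.symm⟩, fun h => h.elim (fun h => absurd h.symm hw) (·.2.symm)⟩
  · rw [mergeInto_of_ne hxv ha, Subtype.mk.injEq]
    exact ⟨.inl, fun h => h.elim id (absurd ·.1 ha)⟩

lemma mergeInto_eq_mergeInto_iff :
    mergeInto hxv a = mergeInto hxv b ↔ a = b ∨ s(a, b) = s(v, x) := by
  by_cases hb : b = v
  · subst hb
    rw [mergeInto_self, mergeInto_eq_mk_iff hxv hxv, Sym2.eq_iff]
    tauto
  · rw [mergeInto_of_ne hxv hb, mergeInto_eq_mk_iff hxv hb, Sym2.eq_iff]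
    constructor
    · rintro (h | ⟨rfl, rfl⟩) <;> tauto
    · rintro (h | ⟨rfl, rfl⟩ | ⟨-, rfl⟩) <;> tauto

lemma mem_map_mergeInto_iff {z : Sym2 V} {w : V} (hw : w ≠ v) :
    ⟨w, hw⟩ ∈ Sym2.map (mergeInto hxv) z ↔ w ∈ z ∨ (w = x ∧ v ∈ z) := by
  simp only [Sym2.mem_map, mergeInto_eq_mk_iff hxv hw]
  constructor
  · rintro ⟨a, ha, rfl | ⟨rfl, rfl⟩⟩
    exacts [.inl ha, .inr ⟨rfl, ha⟩]
  · rintro (h | ⟨rfl, h⟩)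
    exacts [⟨w, h, .inl rfl⟩, ⟨v, h, .inr ⟨rfl, rfl⟩⟩]

/-- Contraction of an edge `vx`: `v` is identified with `x`, and only the edges in `F` are kept. -/
def merge (G : Multigraph V E) (F : Set E) (hF : ∀ e ∈ F, G.ends e ≠ s(v, x)) :
    Multigraph {w // w ≠ v} F where
  ends e := Sym2.map (mergeInto hxv) (G.ends e)
  loopless e := by
    obtain ⟨p, q, hpq⟩ := G.exists_ends_eq e
    rw [hpq, Sym2.map_mk, Sym2.mk_isDiag_iff, mergeInto_eq_mergeInto_iff]
    rintro (h | h)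
    exacts [ne_of_ends_eq hpq h, hF e e.2 (hpq.trans h)]

variable {F : Set E} {hF : ∀ e ∈ F, G.ends e ≠ s(v, x)} {S T : Set E} {S' : Set F}

lemma merge_ends (e : F) : (G.merge hxv F hF).ends e = Sym2.map (mergeInto hxv) (G.ends e) := rfl

include hF in
lemma Reachable.merge (hS : ∀ e ∈ S, (∃ h : e ∈ F, ⟨e, h⟩ ∈ S') ∨ G.ends e = s(v, x))
    (h : G.Reachable S a b) :
    (G.merge hxv F hF).Reachable S' (mergeInto hxv a) (mergeInto hxv b) := by
  refine Relation.ReflTransGen.lift' (mergeInto hxv) (fun a b hab => ?_) a b h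
  obtain ⟨e, he, hq⟩ := hab
  rcases hS e he with ⟨heF, he'⟩ | hvx
  · exact Adj.reachable ⟨⟨e, heF⟩, he', by rw [merge_ends, hq, Sym2.map_mk]⟩
  · rw [Function.onFun, (mergeInto_eq_mergeInto_iff hxv).mpr (.inr (hq ▸ hvx))]

lemma reachable_val_mergeInto {e : E} (hp : p ∈ G.ends e)
    (hv : G.Reachable T v x ∨ v ∉ G.ends e) : G.Reachable T p (mergeInto hxv p).val := by
  by_cases hpv : p = v
  · subst hpv
    rw [mergeInto_self]
    exact hv.resolve_right (not_not.mpr hp)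
  · rw [mergeInto_of_ne hxv hpv]
    exact .refl _

lemma reachable_val_iff_of_merge_ends {e : F} (hv : G.Reachable T v x ∨ v ∉ G.ends e)
    (hpq : G.ends e = s(p, q)) {a' b' : {w // w ≠ v}}
    (hq : (G.merge hxv F hF).ends e = s(a', b')) :
    G.Reachable T a'.val b'.val ↔ G.Reachable T p q := by
  have hp := reachable_val_mergeInto hxv (hpq ▸ Sym2.mem_mk_left p q) hv
  have hq' := reachable_val_mergeInto hxv (hpq ▸ Sym2.mem_mk_right p q) hv
  rw [merge_ends, hpq, Sym2.map_mk, Sym2.eq_iff] at hq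
  rcases hq with ⟨rfl, rfl⟩ | ⟨rfl, rfl⟩
  · exact ⟨fun h => (hp.trans h).trans hq'.symm, fun h => (hp.symm.trans h).trans hq'⟩
  · exact ⟨fun h => (hp.trans h.symm).trans hq'.symm, fun h => ((hp.symm.trans h).trans hq').symm⟩

lemma Reachable.of_merge (hS' : ∀ e ∈ S', e.val ∈ T)
    (hv : ∀ e ∈ S', G.Reachable T v x ∨ v ∉ G.ends e) {a' b' : {w // w ≠ v}}
    (h : (G.merge hxv F hF).Reachable S' a' b') : G.Reachable T a'.val b'.val := by
  refine Relation.ReflTransGen.lift' Subtype.val (fun _ _ ⟨e, he, hq⟩ => ?_) a' b' h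
  obtain ⟨p, q, hpq⟩ := G.exists_ends_eq e
  exact (reachable_val_iff_of_merge_ends hxv (hv e he) hpq hq).mpr
    (Adj.reachable ⟨e, hS' e he, hpq⟩)

lemma Acyclic.merge (hT : G.Acyclic T) (hS' : ∀ e ∈ S', e.val ∈ T)
    (hv : (∃ f ∈ T, f ∉ F ∧ G.ends f = s(v, x)) ∨ ∀ e ∈ S', v ∉ G.ends e) :
    (G.merge hxv F hF).Acyclic S' := by
  intro e he a' b' hq hreach
  have hv' : ∀ f ∈ S', G.Reachable (T \ {e.val}) v x ∨ v ∉ G.ends f := by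
    rcases hv with ⟨f, hf, hfF, hfvx⟩ | hv
    · exact fun _ _ => .inl (Adj.reachable ⟨f, ⟨hf, fun h => hfF (h ▸ e.2)⟩, hfvx⟩)
    · exact fun f hf => .inr (hv f hf)
  obtain ⟨p, q, hpq⟩ := G.exists_ends_eq e
  refine hT e (hS' e he) p q hpq ((reachable_val_iff_of_merge_ends hxv (hv' e he) hpq hq).mp ?_)
  exact hreach.of_merge hxv (T := T \ {e.val})
    (fun f hf => ⟨hS' f hf.1, fun h => hf.2 (Subtype.ext h)⟩) (fun f hf => hv' f hf.1)

lemma deg_merge_eq_ncard {w : V} (hw : w ≠ v) :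
    (G.merge hxv F hF).deg S' ⟨w, hw⟩ =
      {e ∈ Subtype.val '' S' | w ∈ G.ends e ∨ (w = x ∧ v ∈ G.ends e)}.ncard := by
  have himage : Subtype.val '' (G.merge hxv F hF).incEdges S' ⟨w, hw⟩ =
      {e ∈ Subtype.val '' S' | w ∈ G.ends e ∨ (w = x ∧ v ∈ G.ends e)} := by
    ext e
    constructor
    · rintro ⟨e', ⟨he', hw'⟩, rfl⟩
      exact ⟨⟨e', he', rfl⟩, (mem_map_mergeInto_iff hxv hw).mp hw'⟩
    · rintro ⟨⟨e', he', rfl⟩, h⟩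
      exact ⟨e', ⟨he', (mem_map_mergeInto_iff hxv hw).mpr h⟩, rfl⟩
  rw [← himage, Set.ncard_image_of_injective _ Subtype.val_injective, deg]

lemma deg_merge_of_ne {w : V} (hw : w ≠ v) (hwx : w ≠ x) :
    (G.merge hxv F hF).deg S' ⟨w, hw⟩ = G.deg (Subtype.val '' S') w := by
  rw [deg_merge_eq_ncard, deg]
  congr 1
  ext e
  simp [incEdges, hwx]

lemma deg_merge_self [Finite E] :
    (G.merge hxv F hF).deg S' ⟨x, hxv⟩ =
      G.deg (Subtype.val '' S') x + G.deg (Subtype.val '' S') v := by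
  have hunion : {e ∈ Subtype.val '' S' | x ∈ G.ends e ∨ (x = x ∧ v ∈ G.ends e)} =
      G.incEdges (Subtype.val '' S') x ∪ G.incEdges (Subtype.val '' S') v := by
    ext e
    simp only [incEdges, Set.mem_ofPred_eq, Set.mem_union, true_and, and_or_left]
  have hdisj : Disjoint (G.incEdges (Subtype.val '' S') x) (G.incEdges (Subtype.val '' S') v) := by
    rw [Set.disjoint_left]
    rintro _ ⟨⟨e, -, rfl⟩, hx⟩ ⟨-, hv⟩
    exact hF e e.2 ((Sym2.mem_and_mem_iff hxv.symm).mp ⟨hv, hx⟩)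
  rw [deg_merge_eq_ncard, hunion, Set.ncard_union_eq hdisj]
  rfl

lemma IsSpanningTree.of_merge_add_contracted {y : V} {ex ey : E}
    (hT : (G.merge hxv F hF).IsSpanningTree S')
    (hex : G.ends ex = s(v, x)) (hexF : ex ∉ F) (hey : G.ends ey = s(v, y))
    (heyF : ey ∈ F) (hey' : ⟨ey, heyF⟩ ∈ S') (hleaf : ∀ e ∈ S', v ∈ G.ends e → e.val = ey) :
    G.IsSpanningTree (Subtype.val '' S' ∪ {ex}) := by
  set U := Subtype.val '' S' ∪ {ex}
  have hvx : G.Reachable U v x := Adj.reachable ⟨ex, .inr rfl, hex⟩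
  refine ⟨connected_of_reachable_of_ne hxv hvx fun a b =>
    (hT.1 a b).of_merge hxv (fun e he => .inl ⟨e, he, rfl⟩) (fun _ _ => .inl hvx), ?_⟩
  rintro e (⟨f, hf, rfl⟩ | he) p q hpq hreach
  · refine hT.2 f hf _ _ (by rw [merge_ends, hpq, Sym2.map_mk]) (hreach.merge hxv fun e he => ?_)
    rcases he with ⟨⟨e', he', rfl⟩ | he, hne⟩
    · exact .inl ⟨e'.2, he', fun h => hne (congrArg Subtype.val h)⟩
    · exact .inr (Set.mem_singleton_iff.mp he ▸ hex)
  -- a `v`-`x` path avoiding `ex` leaves `v` through `ey`, so `y` and `x` are joined in `S' - ey`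
  rw [Set.mem_singleton_iff.mp he, hex, Sym2.eq_iff] at hpq
  rw [Set.mem_singleton_iff.mp he] at hreach
  have hvx' : G.Reachable (U \ {ex}) v x := by
    rcases hpq with ⟨rfl, rfl⟩ | ⟨rfl, rfl⟩
    exacts [hreach, hreach.symm]
  have hleaf' : ∀ e ∈ U \ {ex}, v ∈ G.ends e → e = ey := by
    rintro _ ⟨⟨e, he, rfl⟩ | he, hne⟩ hv
    exacts [hleaf e he hv, absurd he hne]
  have hvy : G.Reachable (U \ {ex}) v y := Adj.reachable
    ⟨ey, ⟨.inl ⟨_, hey', rfl⟩, fun h => hexF (Set.mem_singleton_iff.mp h ▸ heyF)⟩, hey⟩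
  have hyv := (ne_of_ends_eq hey).symm
  have hyx := (hvy.symm.trans hvx').diff_leaf hleaf' hey hyv hxv
  have hyx' : (G.merge hxv F hF).Reachable (S' \ {⟨ey, heyF⟩}) ⟨y, hyv⟩ ⟨x, hxv⟩ := by
    rw [← mergeInto_of_ne hxv hyv, ← mergeInto_of_ne hxv hxv]
    refine hyx.merge hxv fun e he => .inl ?_
    obtain ⟨⟨he, hne⟩, hney⟩ := he
    rcases he with ⟨e, he, rfl⟩ | he
    exacts [⟨e.2, he, fun h => hney (congrArg Subtype.val h)⟩, absurd he hne]
  refine hT.2 _ hey' _ _ ?_ hyx'.symm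
  rw [merge_ends, hey, Sym2.map_mk, mergeInto_self, mergeInto_of_ne hxv hyv]

lemma IsSpanningTree.of_merge_add_pendant {s : V} {es : E}
    (hT : (G.merge hxv F hF).IsSpanningTree S') (hes : G.ends es = s(v, s))
    (hS'v : ∀ e ∈ S', v ∉ G.ends e) : G.IsSpanningTree (Subtype.val '' S' ∪ {es}) := by
  set U := Subtype.val '' S' ∪ {es}
  have hsv := (ne_of_ends_eq hes).symm
  refine ⟨connected_of_reachable_of_ne hsv (Adj.reachable ⟨es, .inr rfl, hes⟩) fun a b =>
    (hT.1 a b).of_merge hxv (fun e he => .inl ⟨e, he, rfl⟩) (fun e he => .inr (hS'v e he)), ?_⟩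
  rintro e (⟨f, hf, rfl⟩ | he) p q hpq hreach
  · have hpv : p ≠ v := fun h => hS'v f hf (h ▸ hpq ▸ Sym2.mem_mk_left p q)
    have hqv : q ≠ v := fun h => hS'v f hf (h ▸ hpq ▸ Sym2.mem_mk_right p q)
    have hleaf : ∀ e ∈ U \ {f.val}, v ∈ G.ends e → e = es := by
      rintro _ ⟨⟨e, he, rfl⟩ | he, -⟩ hv
      exacts [absurd hv (hS'v e he), he]
    refine hT.2 f hf _ _ (by rw [merge_ends, hpq, Sym2.map_mk])
      ((hreach.diff_leaf hleaf hes hpv hqv).merge hxv fun e he => .inl ?_)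
    obtain ⟨⟨he, hne⟩, hnes⟩ := he
    rcases he with ⟨e, he, rfl⟩ | he
    exacts [⟨e.2, he, fun h => hne (congrArg Subtype.val h)⟩, absurd he hnes]
  · rw [Set.mem_singleton_iff.mp he] at hpq hreach
    rw [hes, Sym2.eq_iff] at hpq
    have hiso : ∀ e ∈ U \ {es}, v ∉ G.ends e := by
      rintro _ ⟨⟨e, he, rfl⟩ | he, hne⟩
      exacts [hS'v e he, absurd he hne]
    rcases hpq with ⟨rfl, rfl⟩ | ⟨rfl, rfl⟩
    exacts [hsv (hreach.eq_of_isolated hiso).symm, hsv (hreach.symm.eq_of_isolated hiso).symm]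

end Merge

section Suppress

variable {v x y s : V} {ex ey es : E} (hinc : ∀ e, v ∈ G.ends e → e = ex ∨ e = ey ∨ e = es)

include hinc in
lemma val_eq_of_mem_ends (e : ({ex, es}ᶜ : Set E)) (hv : v ∈ G.ends e) : e.val = ey := by
  have := e.2
  rcases hinc e hv with h | h | h <;> simp_all

include hinc in
lemma notMem_ends_of_mem_of_disjoint {S1 S2 : Set ({ex, es}ᶜ : Set E)}
    {heyF : ey ∈ ({ex, es}ᶜ : Set E)} (hey1 : ⟨ey, heyF⟩ ∈ S1) (hdis : Disjoint S1 S2)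
    {e : ({ex, es}ᶜ : Set E)} (he : e ∈ S2) : v ∉ G.ends e := fun hv => by
  have hey' : e = ⟨ey, heyF⟩ := Subtype.ext (val_eq_of_mem_ends hinc e hv)
  exact Set.disjoint_left.mp hdis hey1 (hey' ▸ he)

variable [DecidableEq V] (hxv : x ≠ v) {hF : ∀ e ∈ ({ex, es}ᶜ : Set E), G.ends e ≠ s(v, x)}
  (hex : G.ends ex = s(v, x)) (hey : G.ends ey = s(v, y)) (hes : G.ends es = s(v, s))
include hinc hex hes

lemma IsDTD.merge_of_separated {A B : Set E} (h : G.IsDTD A B) (hesA : es ∈ A) (hexB : ex ∈ B)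
    (heyB : ey ∈ B) :
    (G.merge hxv {ex, es}ᶜ hF).IsDTD {e | e.val ∈ A} {e | e.val ∈ B} := by
  obtain ⟨hun, hdis, hA, hB⟩ := h
  have hleafA : ∀ e ∈ A, v ∈ G.ends e → e = es := fun e he hv => by
    rcases hinc e hv with rfl | rfl | rfl
    exacts [absurd hexB (Set.disjoint_left.mp hdis he),
      absurd heyB (Set.disjoint_left.mp hdis he), rfl]
  refine ⟨Set.eq_univ_iff_forall.mpr fun e => Set.eq_univ_iff_forall.mp hun e.val,
    Set.disjoint_left.mpr fun _ ha hb => Set.disjoint_left.mp hdis ha hb, ⟨fun a b => ?_, ?_⟩,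
    ⟨fun a b => ?_, ?_⟩⟩
  · have hab := ((hA.1 a b).diff_leaf hleafA hes a.2 b.2).merge hxv (hF := hF)
      (S' := {e | e.val ∈ A}) fun e he => .inl ⟨?_, he.1⟩
    · simpa using hab
    have hex' : e ≠ ex := fun h => Set.disjoint_left.mp hdis he.1 (h ▸ hexB)
    simpa [hex'] using he.2
  · refine hA.2.merge hxv (fun e he => he) (.inr fun e he hv => e.2 ?_)
    simp [hleafA e he hv]
  · have hab := (hB.1 a b).merge hxv (hF := hF) (S' := {e | e.val ∈ B}) fun e he => ?_
    · simpa using hab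
    by_cases hex' : e = ex
    · exact .inr (hex' ▸ hex)
    · have hes' : e ≠ es := fun h => Set.disjoint_left.mp hdis (h ▸ hesA) he
      exact .inl ⟨by simp [hex', hes'], he⟩
  · exact hB.2.merge hxv (fun e he => he) (.inl ⟨ex, hexB, by simp, hex⟩)

variable {S1 S2 : Set ({ex, es}ᶜ : Set E)} (heyF : ey ∈ ({ex, es}ᶜ : Set E))
  (hey1 : ⟨ey, heyF⟩ ∈ S1)
include hey hey1

lemma IsDTD.of_merge (h : (G.merge hxv {ex, es}ᶜ hF).IsDTD S1 S2) (hxs : x ≠ s) :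
    G.IsDTD (Subtype.val '' S1 ∪ {ex}) (Subtype.val '' S2 ∪ {es}) := by
  obtain ⟨hun, hdis, h1, h2⟩ := h
  have hS2v : ∀ e ∈ S2, v ∉ G.ends e := fun _ he => notMem_ends_of_mem_of_disjoint hinc hey1 hdis he
  refine ⟨?_, ?_, h1.of_merge_add_contracted hxv hex (by simp) hey heyF hey1
    (fun e _ hv => val_eq_of_mem_ends hinc e hv), h2.of_merge_add_pendant hxv hes hS2v⟩
  · refine Set.eq_univ_iff_forall.mpr fun e => ?_
    by_cases hex' : e = ex; · exact .inl (.inr hex')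
    by_cases hes' : e = es; · exact .inr (.inr hes')
    have heF : e ∈ ({ex, es}ᶜ : Set E) := by simp [hex', hes']
    rcases Set.eq_univ_iff_forall.mp hun ⟨e, heF⟩ with h | h
    exacts [.inl (.inl ⟨_, h, rfl⟩), .inr (.inl ⟨_, h, rfl⟩)]
  · rw [Set.disjoint_left]
    rintro _ (⟨e, he1, rfl⟩ | he) (⟨f, hf2, hfe⟩ | hf)
    · exact Set.disjoint_left.mp hdis he1 (Subtype.ext hfe ▸ hf2)
    · exact e.2 (by simp [Set.mem_singleton_iff.mp hf])
    · exact f.2 (by simp [hfe, Set.mem_singleton_iff.mp he])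
    · exact ne_of_ends_eq_of_ne hex hes hxs
        ((Set.mem_singleton_iff.mp he).symm.trans (Set.mem_singleton_iff.mp hf))

lemma Balanced.of_merge [Finite E] {c : ℕ}
    (hG : G.IsDTD (Subtype.val '' S1 ∪ {ex}) (Subtype.val '' S2 ∪ {es}))
    (hdis : Disjoint S1 S2) (hbal : (G.merge hxv {ex, es}ᶜ hF).Balanced c S1 S2)
    (hvc : G.Small c v) (hsc : G.Small c s) :
    G.Balanced c (Subtype.val '' S1 ∪ {ex}) (Subtype.val '' S2 ∪ {es}) := by
  have : Nontrivial V := ⟨⟨x, v, hxv⟩⟩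
  intro w
  by_cases hwv : w = v; · exact hwv ▸ hG.abs_sub_deg_le hvc
  by_cases hws : w = s; · exact hws ▸ hG.abs_sub_deg_le hsc
  have hdisj : ∀ (S : Set ({ex, es}ᶜ : Set E)) (f : E), f ∉ ({ex, es}ᶜ : Set E) →
      Disjoint (Subtype.val '' S) {f} := fun S f hf =>
    Set.disjoint_singleton_right.mpr fun ⟨e, _, he⟩ => hf (he ▸ e.2)
  have h2 : G.deg (Subtype.val '' S2 ∪ {es}) w = G.deg (Subtype.val '' S2) w := by
    rw [deg_union (hdisj _ _ (by simp)), add_eq_left]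
    exact deg_eq_zero_of_forall_notMem fun e he => by
      simp [Set.mem_singleton_iff.mp he, hes, hwv, hws]
  have key := hbal ⟨w, hwv⟩
  by_cases hwx : w = x
  · subst hwx
    have hv1 : G.deg (Subtype.val '' S1) v = 1 := deg_eq_one_of_forall_mem_ends_iff ⟨_, hey1, rfl⟩
      fun f ⟨e, _, he⟩ => ⟨fun hv => he ▸ val_eq_of_mem_ends hinc e (he ▸ hv),
        fun hf => hf ▸ hey ▸ Sym2.mem_mk_left _ _⟩
    have hv2 : G.deg (Subtype.val '' S2) v = 0 := deg_eq_zero_of_forall_notMem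
      fun _ ⟨_, he, hef⟩ => hef ▸ notMem_ends_of_mem_of_disjoint hinc hey1 hdis he
    have hx1 : G.deg {ex} w = 1 := deg_eq_one_of_forall_mem_ends_iff rfl
      fun f hf => iff_of_true (by rw [Set.mem_singleton_iff.mp hf, hex]; simp) hf
    rw [deg_merge_self, deg_merge_self, hv1, hv2] at key
    rw [deg_union (hdisj _ _ (by simp)), hx1, h2]
    simpa using key
  · rw [deg_merge_of_ne _ hwv hwx, deg_merge_of_ne _ hwv hwx] at key
    rw [deg_union (hdisj _ _ (by simp)), h2,
      deg_eq_zero_of_forall_notMem (S := {ex}) fun e he => by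
        simp [Set.mem_singleton_iff.mp he, hex, hwv, hwx]]
    simpa using key

end Suppress

section PoorVertex

variable {v x y s a b : V} {ex ey es ea eb : E}

lemma eq_or_eq_or_eq_of_deg_eq_three [Finite E] (hv : G.deg Set.univ v = 3)
    (hx : v ∈ G.ends ex) (hy : v ∈ G.ends ey) (hs : v ∈ G.ends es)
    (hxy : ex ≠ ey) (hxs : ex ≠ es) (hys : ey ≠ es) (e : E) (he : v ∈ G.ends e) :
    e = ex ∨ e = ey ∨ e = es := by
  have hsub : ({ex, ey, es} : Set E) ⊆ G.incEdges Set.univ v := by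
    rintro _ (rfl | rfl | rfl)
    exacts [⟨trivial, hx⟩, ⟨trivial, hy⟩, ⟨trivial, hs⟩]
  have hcard : ({ex, ey, es} : Set E).ncard = 3 := by
    rw [Set.ncard_insert_of_notMem (by simp [hxy, hxs]), Set.ncard_pair hys]
  have heq := Set.eq_of_subset_of_ncard_le hsub (by rw [hcard]; exact hv.le)
  have hmem : e ∈ ({ex, ey, es} : Set E) := heq ▸ ⟨trivial, he⟩
  simpa using hmem

lemma false_of_isDTD_separating [DecidableEq V] [Finite V] [Finite E] {c : ℕ}
    (hbal : G.NoBalancedDTD c)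
    (hmin : ∀ (n' m' : ℕ) (G' : Multigraph (Fin n') (Fin m')),
      G'.IsDoubleTree → G'.NoBalancedDTD c → Nat.card V ≤ n')
    (hinc : ∀ e, v ∈ G.ends e → e = ex ∨ e = ey ∨ e = es)
    (hex : G.ends ex = s(v, x)) (hey : G.ends ey = s(v, y)) (hes : G.ends es = s(v, s))
    (hxy : x ≠ y) (hxs : x ≠ s) (hys : y ≠ s) (hvc : G.Small c v) (hsc : G.Small c s)
    {A B : Set E} (h : G.IsDTD A B) (hesA : es ∈ A) (hexB : ex ∈ B) (heyB : ey ∈ B) : False := by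
  have hxv : x ≠ v := (ne_of_ends_eq hex).symm
  have hF : ∀ e ∈ ({ex, es}ᶜ : Set E), G.ends e ≠ s(v, x) := fun e he hvx => by
    have hey' : e = ey := val_eq_of_mem_ends hinc ⟨e, he⟩ (hvx ▸ Sym2.mem_mk_left v x)
    rw [hey', hey] at hvx
    exact hxy (Sym2.congr_right.mp hvx).symm
  have heyF : ey ∈ ({ex, es}ᶜ : Set E) := by
    simp [ne_of_ends_eq_of_ne hey hex hxy.symm, ne_of_ends_eq_of_ne hey hes hys]
  have hlift : ∀ S1 S2, (G.merge hxv {ex, es}ᶜ hF).IsDTD S1 S2 →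
      (G.merge hxv {ex, es}ᶜ hF).Balanced c S1 S2 → ⟨ey, heyF⟩ ∈ S1 → False :=
    fun S1 S2 hS hb hey1 => by
      have hG := hS.of_merge hinc hxv hex hey hes heyF hey1 hxs
      exact hbal ⟨_, _, hG, Balanced.of_merge hinc hxv hex hey hes heyF hey1 hG hS.2.1 hb hvc hsc⟩
  obtain ⟨S1, S2, hS, hb⟩ : ∃ S1 S2, (G.merge hxv {ex, es}ᶜ hF).IsDTD S1 S2 ∧
      (G.merge hxv {ex, es}ᶜ hF).Balanced c S1 S2 := by
    by_contra hno
    have hle := le_card_of_minimal hmin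
      ⟨_, _, h.merge_of_separated hinc hxv hex hes hesA hexB heyB⟩ hno
    exact hle.not_gt (Finite.card_subtype_lt (x := v) (not_not.mpr rfl))
  rcases Set.eq_univ_iff_forall.mp hS.1 ⟨ey, heyF⟩ with hey1 | hey2
  exacts [hlift S1 S2 hS hb hey1, hlift S2 S1 hS.symm hb.symm hey2]

variable {T1 T2 : Set E} (hinc : ∀ e, v ∈ G.ends e → e = ea ∨ e = eb ∨ e = es)
  (hea : G.ends ea = s(v, a)) (hes : G.ends es = s(v, s))
  (hsep : ∀ A B, G.IsDTD A B → es ∈ A → ea ∈ B → eb ∈ B → False)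
  (h : G.IsDTD T1 T2) (hes1 : es ∈ T1)
include hinc hea hsep h hes1

lemma IsDTD.xor_mem : Xor (ea ∈ T1) (eb ∈ T1) := by
  by_cases hea1 : ea ∈ T1 <;> by_cases heb1 : eb ∈ T1
  · obtain ⟨e, he, hve⟩ := (h.2.2.2.1 v a).exists_mem_ends (ne_of_ends_eq hea)
    rcases hinc e hve with rfl | rfl | rfl
    exacts [(h.notMem_right hea1 he).elim, (h.notMem_right heb1 he).elim,
      (h.notMem_right hes1 he).elim]
  · exact .inl ⟨hea1, heb1⟩
  · exact .inr ⟨heb1, hea1⟩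
  · exact (hsep T1 T2 h hes1 (h.mem_right hea1) (h.mem_right heb1)).elim

variable (heb : G.ends eb = s(v, b)) (has : a ≠ s) (hea1 : ea ∈ T1) (heb2 : eb ∈ T2)
include hes heb has hea1 heb2

lemma IsDTD.not_reachable_diff_singleton : ¬ G.Reachable (T1 \ {ea}) v b := by
  intro hvb
  have hsv : s ≠ v := (ne_of_ends_eq hes).symm
  have hesa : es ≠ ea := ne_of_ends_eq_of_ne hes hea has.symm
  have hleaf : ∀ e ∈ T1 \ {ea}, v ∈ G.ends e → e = es := fun e he hv => by
    rcases hinc e hv with rfl | rfl | rfl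
    exacts [absurd rfl he.2, absurd heb2 (h.notMem_right he.1), rfl]
  have hsb := ((Adj.reachable (S := T1 \ {ea}) ⟨es, ⟨hes1, hesa⟩, hes⟩).symm.trans hvb).diff_leaf
    hleaf hes hsv (ne_of_ends_eq heb).symm
  have hvb' : ¬ G.Reachable (T1 \ {es}) v b := fun hvb' => h.2.2.1.2 es hes1 v s hes
    (hvb'.trans (hsb.mono (T := T1 \ {es}) fun e he => ⟨he.1.1, he.2⟩).symm)
  have hvs : ¬ G.Reachable (T2 \ {eb}) v s := fun hvs => hsv (hvs.eq_of_isolated fun e he hv => by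
    rcases hinc e hv with rfl | rfl | rfl
    exacts [h.notMem_right hea1 he.1, he.2 rfl, h.notMem_right hes1 he.1]).symm
  exact hsep _ _ (h.exchange hes1 heb2 heb hes hvb' hvs).symm (.inr rfl) (.inl ⟨hea1, hesa.symm⟩)
    (.inr rfl)

lemma IsDTD.reachable_filter_notMem_ends : G.Reachable {e ∈ T1 | s ∉ G.ends e} a b := by
  have hab : G.Reachable (T1 \ {ea}) a b := by
    rcases (h.2.2.1.1 a b).diff_singleton_or hea with hab | ⟨-, hab⟩ | ⟨-, hvb⟩
    exacts [hab, hab,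
      absurd hvb (h.not_reachable_diff_singleton hinc hea hes hsep hes1 heb has hea1 heb2)]
  have has' : ¬ G.Reachable (T1 \ {ea}) a s := fun has' => h.2.2.1.2 ea hea1 v a hea
    ((Adj.reachable (S := T1 \ {ea}) ⟨es, ⟨hes1, ne_of_ends_eq_of_ne hes hea has.symm⟩, hes⟩).trans
      has'.symm)
  exact (hab.filter_notMem_ends has').mono fun e he => ⟨he.1.1, he.2⟩

end PoorVertex

end Multigraph

open Multigraph

theorem poor_three_vertex_structure_general (c : ℕ) (hc : 2 ≤ c) (n m : ℕ)
    (G : Multigraph (Fin n) (Fin m))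
    (hbal : G.NoBalancedDTD c)
    (hmin : ∀ (n' m' : ℕ) (G' : Multigraph (Fin n') (Fin m')),
      G'.IsDoubleTree → G'.NoBalancedDTD c → n ≤ n')
    (v x y s : Fin n) (hv : G.deg Set.univ v = 3)
    (hxy : x ≠ y) (hxs : x ≠ s) (hys : y ≠ s)
    (hsmalls : G.Small c s)
    (ex ey es : Fin m)
    (hex : G.ends ex = s(v, x)) (hey : G.ends ey = s(v, y))
    (hes : G.ends es = s(v, s))
    (T1 T2 : Set (Fin m)) (hDTD : G.IsDTD T1 T2) (hesT1 : es ∈ T1) :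
    Xor' (ex ∈ T1) (ey ∈ T1) ∧
    (ey ∈ T2 → G.IsDTD ((T1 \ {ex}) ∪ {ey}) ((T2 \ {ey}) ∪ {ex})) ∧
    G.Reachable {e ∈ T1 | s ∉ G.ends e} x y := by
  have hinc := eq_or_eq_or_eq_of_deg_eq_three hv (hex ▸ Sym2.mem_mk_left v x)
    (hey ▸ Sym2.mem_mk_left v y) (hes ▸ Sym2.mem_mk_left v s) (ne_of_ends_eq_of_ne hex hey hxy)
    (ne_of_ends_eq_of_ne hex hes hxs) (ne_of_ends_eq_of_ne hey hes hys)
  have hinc' : ∀ e, v ∈ G.ends e → e = ey ∨ e = ex ∨ e = es :=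
    fun e he => or_left_comm.mp (hinc e he)
  have hsep : ∀ A B, G.IsDTD A B → es ∈ A → ex ∈ B → ey ∈ B → False := fun _ _ =>
    false_of_isDTD_separating hbal (by simpa using hmin) hinc hex hey hes hxy hxs hys
      (show G.deg _ v ≤ c + 2 by omega) hsmalls
  have hsep' : ∀ A B, G.IsDTD A B → es ∈ A → ey ∈ B → ex ∈ B → False :=
    fun A B h h1 h2 h3 => hsep A B h h1 h3 h2
  have hxor := hDTD.xor_mem hinc hex hsep hesT1
  refine ⟨hxor, fun hey2 => ?_, ?_⟩
  · have hex1 : ex ∈ T1 := hxor.elim (·.1) fun h => absurd hey2 (hDTD.notMem_right h.1)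
    refine hDTD.exchange hex1 hey2 hey hex
      (hDTD.not_reachable_diff_singleton hinc hex hes hsep hesT1 hey hxs hex1 hey2) fun hvx => ?_
    refine ne_of_ends_eq hex (hvx.eq_of_isolated fun e he hve => ?_)
    rcases hinc e hve with rfl | rfl | rfl
    exacts [hDTD.notMem_right hex1 he.1, he.2 rfl, hDTD.notMem_right hesT1 he.1]
  · rcases hxor with ⟨hex1, hey1⟩ | ⟨hey1, hex1⟩
    · exact hDTD.reachable_filter_notMem_ends hinc hex hes hsep hesT1 hey hxs hex1
        (hDTD.mem_right hey1)
    · exact (hDTD.reachable_filter_notMem_ends hinc' hey hes hsep' hesT1 hex hys hey1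
        (hDTD.mem_right hex1)).symm

/-- **Theorem (Statement 10).** In a vertex-minimal double tree `G` with no
`c`-balanced double tree decomposition (`c ≥ 2`): let `v` be a poor 3-vertex
with big neighbours `x, y` and small neighbour `s`, joined to them by edges
`ex, ey, es`, and let `T1 ⊔ T2` be a double tree decomposition with
`es ∈ T1`.  Then (i) exactly one of `ex, ey` lies in `T1`; (ii) if
`ey ∈ T2` then `(T1 - ex + ey) ⊔ (T2 + ex - ey)` is again a double tree
decomposition; (iii) the path from `x` to `y` in `T1` avoids `s`, i.e. `x`
and `y` are joined in `T1` using no edge incident to `s`. -/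
theorem poor_three_vertex_structure (c : ℕ) (hc : 2 ≤ c) (n m : ℕ)
    (G : Multigraph (Fin n) (Fin m))
    (hG : G.IsDoubleTree) (hbal : G.NoBalancedDTD c)
    (hmin : ∀ (n' m' : ℕ) (G' : Multigraph (Fin n') (Fin m')),
      G'.IsDoubleTree → G'.NoBalancedDTD c → n ≤ n')
    (v x y s : Fin n) (hv : G.deg Set.univ v = 3)
    (hxy : x ≠ y) (hxs : x ≠ s) (hys : y ≠ s)
    (hbigx : G.Big c x) (hbigy : G.Big c y) (hsmalls : G.Small c s)
    (ex ey es : Fin m)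
    (hex : G.ends ex = s(v, x)) (hey : G.ends ey = s(v, y))
    (hes : G.ends es = s(v, s))
    (T1 T2 : Set (Fin m)) (hDTD : G.IsDTD T1 T2) (hesT1 : es ∈ T1) :
    Xor' (ex ∈ T1) (ey ∈ T1) ∧
    (ey ∈ T2 → G.IsDTD ((T1 \ {ex}) ∪ {ey}) ((T2 \ {ey}) ∪ {ex})) ∧
    G.Reachable {e ∈ T1 | s ∉ G.ends e} x y :=
  poor_three_vertex_structure_general c hc n m G hbal hmin v x y s hv hxy hxs hys hsmalls ex ey es
    hex hey hes T1 T2 hDTD hesT1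
end

section
/- For every integer k ≥ 2 and every constant c > 0, there exists a finite digraph D that is the arc-disjoint union of k spanning arborescences, such that for every decomposition of D into k spanning arborescences A1, ..., Ak there exist distinct indices i, j and a vertex v with |d^out_{Ai}(v) - d^out_{Aj}(v)| > c. -/
/-- A multidigraph: arcs `E` with an endpoint map giving (tail, head). -/
structure Multidigraph (V : Type*) (E : Type*) where
  ends : E → V × V

namespace Multidigraph

variable {V E : Type*}

/-- The out-degree of `v` in the spanning subdigraph with arc set `S`. -/
noncomputable def dOut (D : Multidigraph V E) (S : Set E) (v : V) : ℕ :=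
  {e ∈ S | (D.ends e).1 = v}.ncard

/-- The in-degree of `v` in the spanning subdigraph with arc set `S`. -/
noncomputable def dIn (D : Multidigraph V E) (S : Set E) (v : V) : ℕ :=
  {e ∈ S | (D.ends e).2 = v}.ncard

/-- Directed reachability using arcs in `S`. -/
def Reach (D : Multidigraph V E) (S : Set E) (a b : V) : Prop :=
  Relation.ReflTransGen (fun u w => ∃ e ∈ S, D.ends e = (u, w)) a b

/-- `S` is the arc set of a spanning arborescence: there is a root from which
every vertex is reachable, the root has in-degree 0, and every other vertex
has in-degree 1. -/
def IsArborescence (D : Multidigraph V E) (S : Set E) : Prop :=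
  ∃ r : V, (∀ v, D.Reach S r v) ∧ D.dIn S r = 0 ∧ ∀ v, v ≠ r → D.dIn S v = 1

/-- The spanning subdigraph with arc set `S` is strongly connected. -/
def StronglyConnected (D : Multidigraph V E) (S : Set E) : Prop :=
  ∀ a b : V, D.Reach S a b

end Multidigraph

namespace ArbCex

/-- The counterexample digraph: vertices `{0,…,s}` where `s` is the "hub",
arcs indexed by `Fin (k*s)`; arc `e` with `i = e/s`, `t = e%s` is
`t → t+1` (a chain arc, note `t = s-1` gives `s-1 → hub`) if `i < k-1`,
and otherwise a star arc `0 → hub` (if `t = 0`) or `hub → t` (if `t ≠ 0`). -/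
def Dg (k s : ℕ) (hs : 0 < s) : Multidigraph (Fin (s+1)) (Fin (k*s)) where
  ends e :=
    if e.val / s < k - 1 then
      (⟨e.val % s, Nat.lt_succ_of_lt (Nat.mod_lt _ hs)⟩,
       ⟨e.val % s + 1, Nat.succ_lt_succ (Nat.mod_lt _ hs)⟩)
    else if e.val % s = 0 then
      (⟨0, Nat.succ_pos s⟩, ⟨s, Nat.lt_succ_self s⟩)
    else
      (⟨s, Nat.lt_succ_self s⟩, ⟨e.val % s, Nat.lt_succ_of_lt (Nat.mod_lt _ hs)⟩)

variable {k s : ℕ}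

section Basic

lemma idx_lt {i w : ℕ} (hi : i < k) (hw : w < s) : s * i + w < k * s :=
  calc s * i + w < s * i + s := by omega
  _ = s * (i+1) := (Nat.mul_succ s i).symm
  _ ≤ s * k := Nat.mul_le_mul_left s hi
  _ = k * s := Nat.mul_comm s k

lemma idx_div (hs : 0 < s) {i w : ℕ} (hw : w < s) : (s * i + w) / s = i := by
  rw [Nat.mul_add_div hs, Nat.div_eq_of_lt hw, Nat.add_zero]

lemma idx_mod (hs : 0 < s) {i w : ℕ} (hw : w < s) : (s * i + w) % s = w := by
  rw [Nat.mul_add_mod, Nat.mod_eq_of_lt hw]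

lemma ends_chain (hs : 0 < s) {e : Fin (k*s)} (h : e.val / s < k - 1) :
    (Dg k s hs).ends e =
      (⟨e.val % s, Nat.lt_succ_of_lt (Nat.mod_lt _ hs)⟩,
       ⟨e.val % s + 1, Nat.succ_lt_succ (Nat.mod_lt _ hs)⟩) := by
  simp only [Dg, if_pos h]

lemma ends_star0 (hs : 0 < s) {e : Fin (k*s)} (h : ¬ e.val / s < k - 1) (h0 : e.val % s = 0) :
    (Dg k s hs).ends e = (⟨0, Nat.succ_pos s⟩, ⟨s, Nat.lt_succ_self s⟩) := by
  simp only [Dg, if_neg h, if_pos h0]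

lemma ends_star (hs : 0 < s) {e : Fin (k*s)} (h : ¬ e.val / s < k - 1) (h0 : e.val % s ≠ 0) :
    (Dg k s hs).ends e =
      (⟨s, Nat.lt_succ_self s⟩, ⟨e.val % s, Nat.lt_succ_of_lt (Nat.mod_lt _ hs)⟩) := by
  simp only [Dg, if_neg h, if_neg h0]

lemma chain_tail_val (hs : 0 < s) {e : Fin (k*s)} (h : e.val / s < k - 1) :
    ((Dg k s hs).ends e).1.val = e.val % s := by rw [ends_chain hs h]

lemma chain_head_val (hs : 0 < s) {e : Fin (k*s)} (h : e.val / s < k - 1) :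
    ((Dg k s hs).ends e).2.val = e.val % s + 1 := by rw [ends_chain hs h]

lemma star0_tail_val (hs : 0 < s) {e : Fin (k*s)} (h : ¬ e.val / s < k - 1)
    (h0 : e.val % s = 0) : ((Dg k s hs).ends e).1.val = 0 := by rw [ends_star0 hs h h0]

lemma star0_head_val (hs : 0 < s) {e : Fin (k*s)} (h : ¬ e.val / s < k - 1)
    (h0 : e.val % s = 0) : ((Dg k s hs).ends e).2.val = s := by rw [ends_star0 hs h h0]

lemma star_tail_val (hs : 0 < s) {e : Fin (k*s)} (h : ¬ e.val / s < k - 1)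
    (h0 : e.val % s ≠ 0) : ((Dg k s hs).ends e).1.val = s := by rw [ends_star hs h h0]

lemma star_head_val (hs : 0 < s) {e : Fin (k*s)} (h : ¬ e.val / s < k - 1)
    (h0 : e.val % s ≠ 0) : ((Dg k s hs).ends e).2.val = e.val % s := by
  rw [ends_star hs h h0]

/-- No arc has head `0`. -/
lemma head_ne_zero (hs : 0 < s) (e : Fin (k*s)) : ((Dg k s hs).ends e).2 ≠ 0 := by
  by_cases h : e.val / s < k - 1
  · rw [ends_chain hs h]
    intro hcon
    have := congrArg Fin.val hcon
    simp at this
  · by_cases h0 : e.val % s = 0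
    · rw [ends_star0 hs h h0]
      intro hcon
      have := congrArg Fin.val hcon
      simp at this
      omega
    · rw [ends_star hs h h0]
      intro hcon
      have := congrArg Fin.val hcon
      simp at this
      exact h0 this

/-- Anything that reaches `0` is `0`. -/
lemma reach_zero (hs : 0 < s) {S : Set (Fin (k*s))} {a : Fin (s+1)}
    (h : (Dg k s hs).Reach S a 0) : a = 0 := by
  rcases Relation.ReflTransGen.cases_tail h with h1 | ⟨b, _, e, _, he⟩
  · exact h1.symm
  · exact absurd (congrArg Prod.snd he) (head_ne_zero hs e)

/-- In any arborescence class, the root is `0`, so `0` reaches everything. -/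
lemma root_zero (hs : 0 < s) {S : Set (Fin (k*s))} (h : (Dg k s hs).IsArborescence S) :
    (∀ v, (Dg k s hs).Reach S 0 v) ∧
      (∀ v : Fin (s+1), v ≠ 0 → (Dg k s hs).dIn S v = 1) := by
  obtain ⟨r, hreach, -, hone⟩ := h
  have hr : r = 0 := reach_zero hs (hreach 0)
  subst hr
  exact ⟨hreach, fun v hv => hone v hv⟩

/-- Uniqueness of the in-arc at a nonzero vertex. -/
lemma in_arc_unique (hs : 0 < s) {S : Set (Fin (k*s))} (h : (Dg k s hs).IsArborescence S)
    {v : Fin (s+1)} (hv : v ≠ 0) {e e' : Fin (k*s)} (he : e ∈ S) (he' : e' ∈ S)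
    (h2 : ((Dg k s hs).ends e).2 = v) (h2' : ((Dg k s hs).ends e').2 = v) :
    e = e' := by
  have h1 := (root_zero hs h).2 v hv
  rw [Multidigraph.dIn] at h1
  obtain ⟨x, hx⟩ := Set.ncard_eq_one.mp h1
  have hxe : e ∈ ({x} : Set (Fin (k*s))) := hx ▸ ⟨he, h2⟩
  have hxe' : e' ∈ ({x} : Set (Fin (k*s))) := hx ▸ ⟨he', h2'⟩
  rw [Set.mem_singleton_iff] at hxe hxe'
  rw [hxe, hxe']

/-- Existence of an in-arc at a nonzero vertex. -/
lemma in_arc_exists (hs : 0 < s) {S : Set (Fin (k*s))} (h : (Dg k s hs).IsArborescence S)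
    {v : Fin (s+1)} (hv : v ≠ 0) : ∃ e ∈ S, ((Dg k s hs).ends e).2 = v := by
  have h1 := (root_zero hs h).2 v hv
  rw [Multidigraph.dIn] at h1
  obtain ⟨x, hx⟩ := Set.ncard_eq_one.mp h1
  have : x ∈ {e ∈ S | ((Dg k s hs).ends e).2 = v} := hx ▸ rfl
  exact ⟨x, this.1, this.2⟩


/-- **Key forcing lemma**: if an arborescence class contains a "top chain arc"
(one with ends `(s-1, s)`), then it contains no arc leaving the hub `s`.
Otherwise the upward-closed interval `{u | t ≤ u}` would be closed under
taking the (unique) in-arc, contradicting reachability from the root `0`. -/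
lemma no_out_of_hub (hs : 0 < s) (hs3 : 3 ≤ s) {S : Set (Fin (k*s))}
    (hA : (Dg k s hs).IsArborescence S)
    {e : Fin (k*s)} (he : e ∈ S)
    (hT : ((Dg k s hs).ends e).1.val = s - 1) (hH : ((Dg k s hs).ends e).2.val = s)
    {e' : Fin (k*s)} (he' : e' ∈ S) (hT' : ((Dg k s hs).ends e').1.val = s) :
    False := by
  -- `e'` must be a star arc `s → t` with `1 ≤ t < s`
  have hmod' : e'.val % s < s := Nat.mod_lt _ hs
  by_cases hd' : e'.val / s < k - 1
  · rw [ends_chain hs hd'] at hT'; simp only at hT'; omega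
  by_cases h0' : e'.val % s = 0
  · rw [ends_star0 hs hd' h0'] at hT'; simp only at hT'; omega
  set t := e'.val % s with ht_def
  have hhead' : ((Dg k s hs).ends e').2.val = t := by
    rw [ends_star hs hd' h0']
  have ht1 : 1 ≤ t := Nat.one_le_iff_ne_zero.mpr h0'
  -- closure of `{u | t ≤ u.val}` under taking in-arcs
  have hclosed : ∀ g ∈ S, t ≤ ((Dg k s hs).ends g).2.val →
      t ≤ ((Dg k s hs).ends g).1.val := by
    intro g hg hle
    by_cases hgd : g.val / s < k - 1
    · rw [ends_chain hs hgd] at hle ⊢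
      simp only at hle ⊢
      by_cases hgt : t ≤ g.val % s
      · exact hgt
      · exfalso
        -- then `g` is an in-arc of the vertex `t`, as is `e'`, so `g = e'`
        have hveq : ((Dg k s hs).ends g).2 = ((Dg k s hs).ends e').2 := by
          apply Fin.ext
          rw [hhead']
          rw [ends_chain hs hgd]
          simp only
          omega
        have hvne : ((Dg k s hs).ends e').2 ≠ 0 := by
          intro hzz
          have := congrArg Fin.val hzz
          rw [hhead'] at this
          simp at this
          omega
        have hge : g = e' := in_arc_unique hs hA hvne hg he' hveq rfl
        have htg : ((Dg k s hs).ends g).1.val = g.val % s := by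
          rw [ends_chain hs hgd]
        rw [hge] at htg
        omega
    · by_cases hg0 : g.val % s = 0
      · exfalso
        -- then `g` is an in-arc of the hub, as is `e`, so `g = e`
        have hveq : ((Dg k s hs).ends g).2 = ((Dg k s hs).ends e).2 := by
          apply Fin.ext
          rw [hH, ends_star0 hs hgd hg0]
        have hvne : ((Dg k s hs).ends e).2 ≠ 0 := by
          intro hzz
          have := congrArg Fin.val hzz
          rw [hH] at this
          simp at this
          omega
        have hge : g = e := in_arc_unique hs hA hvne hg he hveq rfl
        have : ((Dg k s hs).ends g).1.val = 0 := by
          rw [ends_star0 hs hgd hg0]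
        rw [hge, hT] at this
        omega
      · rw [ends_star hs hgd hg0]
        simp only
        omega
  -- reachability from 0 contradicts closedness
  have hR := (root_zero hs hA).1
  have key : ∀ x : Fin (s+1), (Dg k s hs).Reach S 0 x → ¬ t ≤ x.val := by
    intro x hx
    induction hx with
    | refl =>
      simp only [Fin.val_zero]
      omega
    | tail hab hbc ih =>
      obtain ⟨g, hg, hge⟩ := hbc
      intro hle
      apply ih
      have h2 : t ≤ ((Dg k s hs).ends g).2.val := by rw [hge]; exact hle
      have h1 := hclosed g hg h2
      rw [hge] at h1
      exact h1
  exact key ⟨s, Nat.lt_succ_self s⟩ (hR _) (by simpa using Nat.le_of_lt hmod')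


/-- The canonical decomposition: class `i` consists of arcs with `e/s = i`. -/
lemma exists_decomposition (hs : 0 < s) (hk : 2 ≤ k) :
    ∃ f : Fin k → Set (Fin (k*s)), (⋃ i, f i) = Set.univ ∧
      (∀ i j, i ≠ j → Disjoint (f i) (f j)) ∧
      ∀ i, (Dg k s hs).IsArborescence (f i) := by
  refine ⟨fun i => {e | e.val / s = i.val}, ?_, ?_, ?_⟩
  · ext e
    simp only [Set.mem_iUnion, Set.mem_setOf_eq, Set.mem_univ, iff_true]
    exact ⟨⟨e.val / s, (Nat.div_lt_iff_lt_mul hs).mpr e.isLt⟩, rfl⟩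
  · intro i j hij
    rw [Set.disjoint_left]
    rintro e he1 he2
    simp only [Set.mem_setOf_eq] at he1 he2
    exact hij (Fin.ext (he1.symm.trans he2))
  · intro i
    refine ⟨0, ?_, ?_, ?_⟩
    · -- reachability from 0
      intro v
      by_cases hcase : i.val < k - 1
      · -- chain class: 0 → 1 → ⋯ → s
        have key : ∀ w : ℕ, ∀ h : w < s + 1,
            (Dg k s hs).Reach {e | e.val / s = i.val} 0 ⟨w, h⟩ := by
          intro w
          induction w with
          | zero =>
            intro h
            have h0 : (⟨0, h⟩ : Fin (s+1)) = 0 := by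
              apply Fin.ext; simp
            rw [h0]
            exact Relation.ReflTransGen.refl
          | succ w ih =>
            intro h
            have hw : w < s := by omega
            refine Relation.ReflTransGen.tail (ih (by omega))
              ⟨⟨s * i.val + w, idx_lt i.isLt hw⟩, idx_div hs hw, ?_⟩
            have hd : (⟨s * i.val + w, idx_lt i.isLt hw⟩ : Fin (k*s)).val / s < k - 1 := by
              simpa [idx_div hs hw] using hcase
            rw [ends_chain hs hd]
            simp [Prod.ext_iff, Fin.ext_iff, idx_mod hs hw]
        have hkey := key v.val v.isLt
        have hv : (⟨v.val, v.isLt⟩ : Fin (s+1)) = v := Fin.ext rfl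
        rw [hv] at hkey
        exact hkey
      · -- star class: 0 → s → w
        have hia : i.val = k - 1 := by have := i.isLt; omega
        have hmem0 : (⟨s * (k-1), by simpa using idx_lt (by omega) hs⟩ : Fin (k*s)) ∈
            {e : Fin (k*s) | e.val / s = i.val} := by
          simp only [Set.mem_setOf_eq, hia]
          exact Nat.mul_div_cancel_left (k-1) hs
        have hends0 : (Dg k s hs).ends ⟨s * (k-1), by simpa using idx_lt (by omega) hs⟩ =
            (0, ⟨s, Nat.lt_succ_self s⟩) := by
          have hdv : (s * (k-1)) / s = k - 1 := Nat.mul_div_cancel_left (k-1) hs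
          have hmd : (s * (k-1)) % s = 0 := Nat.mul_mod_right s (k-1)
          rw [ends_star0 hs (by simp only [hdv]; omega) hmd]
          simp [Prod.ext_iff, Fin.ext_iff]
        have step1 : (Dg k s hs).Reach {e : Fin (k*s) | e.val / s = i.val} 0
            ⟨s, Nat.lt_succ_self s⟩ :=
          Relation.ReflTransGen.single ⟨_, hmem0, hends0⟩
        rcases Nat.eq_zero_or_pos v.val with hv0 | hvpos
        · have : v = 0 := Fin.ext (by simpa using hv0)
          rw [this]
          exact Relation.ReflTransGen.refl
        rcases Nat.lt_or_ge v.val s with hvs | hvs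
        · refine Relation.ReflTransGen.tail step1
            ⟨⟨s * (k-1) + v.val, idx_lt (by omega) hvs⟩, ?_, ?_⟩
          · simp only [Set.mem_setOf_eq, hia]
            exact idx_div hs hvs
          · have hd : ¬ ((⟨s * (k-1) + v.val, idx_lt (by omega) hvs⟩ : Fin (k*s)).val / s
                < k - 1) := by
              simp only [idx_div hs hvs]; omega
            rw [ends_star hs hd (by simp only [idx_mod hs hvs]; omega)]
            simp [Prod.ext_iff, Fin.ext_iff, idx_mod hs hvs]
        · have : v = ⟨s, Nat.lt_succ_self s⟩ := Fin.ext (by have := v.isLt; simp; omega)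
          rw [this]; exact step1
    · -- dIn 0 = 0
      have hempty : {e ∈ {e : Fin (k*s) | e.val / s = i.val} |
          ((Dg k s hs).ends e).2 = 0} = ∅ := by
        ext e
        simp only [Set.mem_setOf_eq, Set.mem_empty_iff_false, iff_false, not_and]
        intro _
        exact head_ne_zero hs e
      rw [Multidigraph.dIn, hempty, Set.ncard_empty]
    · -- dIn v = 1 for v ≠ 0
      intro v hv
      have hvval : 1 ≤ v.val := by
        rcases Nat.eq_zero_or_pos v.val with h0 | h1
        · exact absurd (Fin.ext (by simpa using h0)) hv
        · exact h1
      have hvlt : v.val < s + 1 := v.isLt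
      by_cases hcase : i.val < k - 1
      · -- chain class: the unique in-arc of `v` is `(v-1) → v`
        have hsing : {e ∈ {e : Fin (k*s) | e.val / s = i.val} |
            ((Dg k s hs).ends e).2 = v} =
            {⟨s * i.val + (v.val - 1), idx_lt i.isLt (by omega)⟩} := by
          ext e
          simp only [Set.mem_setOf_eq, Set.mem_singleton_iff]
          constructor
          · rintro ⟨hmem, hhead⟩
            have hd : e.val / s < k - 1 := by rw [hmem]; exact hcase
            rw [ends_chain hs hd] at hhead
            have hhv := congrArg Fin.val hhead
            simp only at hhv
            apply Fin.ext
            simp only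
            have hdm : s * (e.val / s) + e.val % s = e.val := Nat.div_add_mod _ _
            rw [hmem] at hdm
            omega
          · rintro rfl
            constructor
            · exact idx_div hs (by omega)
            · have hd : (⟨s * i.val + (v.val - 1), idx_lt i.isLt (by omega)⟩ :
                  Fin (k*s)).val / s < k - 1 := by
                simpa [idx_div hs (show v.val - 1 < s by omega)] using hcase
              rw [ends_chain hs hd]
              apply Fin.ext
              simp only [idx_mod hs (show v.val - 1 < s by omega)]
              omega
        rw [Multidigraph.dIn, hsing, Set.ncard_singleton]
      · -- star class
        have hia : i.val = k - 1 := by have := i.isLt; omega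
        rcases Nat.lt_or_ge v.val s with hvs | hvs
        · -- in-arc is `s → v`
          have hsing : {e ∈ {e : Fin (k*s) | e.val / s = i.val} |
              ((Dg k s hs).ends e).2 = v} =
              {⟨s * (k-1) + v.val, idx_lt (by omega) hvs⟩} := by
            ext e
            simp only [Set.mem_setOf_eq, Set.mem_singleton_iff]
            constructor
            · rintro ⟨hmem, hhead⟩
              have hd : ¬ e.val / s < k - 1 := by rw [hmem, hia]; omega
              by_cases h0 : e.val % s = 0
              · rw [ends_star0 hs hd h0] at hhead
                have := congrArg Fin.val hhead
                simp only at this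
                omega
              · rw [ends_star hs hd h0] at hhead
                have hhv := congrArg Fin.val hhead
                simp only at hhv
                apply Fin.ext
                simp only
                have hdm : s * (e.val / s) + e.val % s = e.val := Nat.div_add_mod _ _
                rw [hmem, hia] at hdm
                omega
            · rintro rfl
              refine ⟨(idx_div hs hvs).trans hia.symm, ?_⟩
              have hd : ¬ ((⟨s * (k-1) + v.val, idx_lt (by omega) hvs⟩ :
                  Fin (k*s)).val / s < k - 1) := by
                simp only [idx_div hs hvs]; omega
              rw [ends_star hs hd (by simp only [idx_mod hs hvs]; omega)]
              apply Fin.ext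
              simp [idx_mod hs hvs]
          rw [Multidigraph.dIn, hsing, Set.ncard_singleton]
        · -- v is the hub; in-arc is `0 → s`
          have hvv : v.val = s := by omega
          have hsing : {e ∈ {e : Fin (k*s) | e.val / s = i.val} |
              ((Dg k s hs).ends e).2 = v} =
              {⟨s * (k-1), by simpa using idx_lt (show k-1 < k by omega) hs⟩} := by
            ext e
            simp only [Set.mem_setOf_eq, Set.mem_singleton_iff]
            constructor
            · rintro ⟨hmem, hhead⟩
              have hd : ¬ e.val / s < k - 1 := by rw [hmem, hia]; omega
              by_cases h0 : e.val % s = 0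
              · apply Fin.ext
                simp only
                have hdm : s * (e.val / s) + e.val % s = e.val := Nat.div_add_mod _ _
                rw [hmem, hia] at hdm
                omega
              · rw [ends_star hs hd h0] at hhead
                have hhv := congrArg Fin.val hhead
                simp only at hhv
                have := Nat.mod_lt e.val hs
                omega
            · rintro rfl
              have hdv : (s * (k-1)) / s = k - 1 := Nat.mul_div_cancel_left (k-1) hs
              have hmd : (s * (k-1)) % s = 0 := Nat.mul_mod_right s (k-1)
              refine ⟨hdv.trans hia.symm, ?_⟩
              rw [ends_star0 hs (by simp only [hdv]; omega) hmd]
              apply Fin.ext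
              simp [hvv]
          rw [Multidigraph.dIn, hsing, Set.ncard_singleton]


/-- In any decomposition, the class containing the arc `0 → s` necessarily
contains all `s-1` star arcs `s → t`, while the class containing a top chain
arc has out-degree `0` at the hub. -/
lemma forced_unbalanced (hs : 0 < s) (hs3 : 3 ≤ s) (hk : 2 ≤ k)
    (f : Fin k → Set (Fin (k*s))) (hcov : (⋃ i, f i) = Set.univ)
    (hdis : ∀ i j, i ≠ j → Disjoint (f i) (f j))
    (harb : ∀ i, (Dg k s hs).IsArborescence (f i)) :
    ∃ i j, i ≠ j ∧ ∃ v : Fin (s+1),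
      ((s:ℤ) - 1) ≤ |((Dg k s hs).dOut (f i) v : ℤ) - ((Dg k s hs).dOut (f j) v : ℤ)| := by
  have hcls : ∀ e : Fin (k*s), ∃ i, e ∈ f i := by
    intro e
    have : e ∈ ⋃ i, f i := by rw [hcov]; trivial
    exact Set.mem_iUnion.mp this
  have hub_ne : (⟨s, Nat.lt_succ_self s⟩ : Fin (s+1)) ≠ 0 := by
    intro hzz
    have := congrArg Fin.val hzz
    simp only [Fin.val_zero] at this
    omega
  -- the distinguished arc `a0 : 0 → s`
  have ha0lt : s * (k-1) < k * s := by simpa using idx_lt (show k-1 < k by omega) hs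
  have ha0dv : (⟨s * (k-1), ha0lt⟩ : Fin (k*s)).val / s = k - 1 :=
    Nat.mul_div_cancel_left (k-1) hs
  have ha0md : (⟨s * (k-1), ha0lt⟩ : Fin (k*s)).val % s = 0 := Nat.mul_mod_right s (k-1)
  have ha0H : ((Dg k s hs).ends ⟨s * (k-1), ha0lt⟩).2 = ⟨s, Nat.lt_succ_self s⟩ :=
    Fin.ext (star0_head_val hs (by omega) ha0md)
  -- the distinguished arc `e0 : s-1 → s` (a top chain arc, in copy 0)
  have he0lt : s - 1 < k * s := by
    have : s ≤ k * s := Nat.le_mul_of_pos_left s (by omega)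
    omega
  have he0dv : (⟨s - 1, he0lt⟩ : Fin (k*s)).val / s = 0 :=
    Nat.div_eq_of_lt (show s - 1 < s by omega)
  have he0md : (⟨s - 1, he0lt⟩ : Fin (k*s)).val % s = s - 1 :=
    Nat.mod_eq_of_lt (show s - 1 < s by omega)
  have he0d : (⟨s - 1, he0lt⟩ : Fin (k*s)).val / s < k - 1 := by rw [he0dv]; omega
  have hende0T : ((Dg k s hs).ends ⟨s - 1, he0lt⟩).1.val = s - 1 := by
    rw [chain_tail_val hs he0d, he0md]
  have hende0H : ((Dg k s hs).ends ⟨s - 1, he0lt⟩).2 = ⟨s, Nat.lt_succ_self s⟩ := by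
    apply Fin.ext
    rw [chain_head_val hs he0d, he0md]
    show s - 1 + 1 = s
    omega
  -- any class having an out-arc of the hub contains a0
  have key : ∀ i : Fin k, ∀ e' ∈ f i,
      ((Dg k s hs).ends e').1.val = s → (⟨s * (k-1), ha0lt⟩ : Fin (k*s)) ∈ f i := by
    intro i e' he' ht'
    obtain ⟨e, he, hhead⟩ := in_arc_exists hs (harb i) hub_ne
    have hheadv : ((Dg k s hs).ends e).2.val = s := by rw [hhead]
    by_cases hd : e.val / s < k - 1
    · exfalso
      have hmd : e.val % s = s - 1 := by
        have := chain_head_val hs hd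
        have := Nat.mod_lt e.val hs
        omega
      have hT : ((Dg k s hs).ends e).1.val = s - 1 := by
        rw [chain_tail_val hs hd, hmd]
      exact no_out_of_hub hs hs3 (harb i) he hT hheadv he' ht'
    · by_cases h0 : e.val % s = 0
      · have : e = ⟨s * (k-1), ha0lt⟩ := by
          apply Fin.ext
          have hdm : s * (e.val / s) + e.val % s = e.val := Nat.div_add_mod _ _
          have hlt : e.val / s < k := (Nat.div_lt_iff_lt_mul hs).mpr e.isLt
          have h1 : e.val / s = k - 1 := by omega
          rw [h0, Nat.add_zero, h1] at hdm
          exact hdm.symm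
        rwa [this] at he
      · exfalso
        have := star_head_val hs hd h0
        have := Nat.mod_lt e.val hs
        omega
  -- the class of a0
  obtain ⟨i1, hi1⟩ := hcls (⟨s * (k-1), ha0lt⟩ : Fin (k*s))
  -- all star arcs `s → w` are in class i1
  have hstar : ∀ w : ℕ, 1 ≤ w → ∀ hws : w < s,
      (⟨s * (k-1) + w, idx_lt (show k-1 < k by omega) hws⟩ : Fin (k*s)) ∈ f i1 := by
    intro w hw1 hws
    obtain ⟨iw, hiw⟩ :=
      hcls (⟨s * (k-1) + w, idx_lt (show k-1 < k by omega) hws⟩ : Fin (k*s))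
    have hσdv : (⟨s * (k-1) + w, idx_lt (show k-1 < k by omega) hws⟩ :
        Fin (k*s)).val / s = k - 1 := idx_div hs hws
    have hσmd : (⟨s * (k-1) + w, idx_lt (show k-1 < k by omega) hws⟩ :
        Fin (k*s)).val % s = w := idx_mod hs hws
    have hdne : ¬ (⟨s * (k-1) + w, idx_lt (show k-1 < k by omega) hws⟩ :
        Fin (k*s)).val / s < k - 1 := by rw [hσdv]; omega
    have h0ne : (⟨s * (k-1) + w, idx_lt (show k-1 < k by omega) hws⟩ :
        Fin (k*s)).val % s ≠ 0 := by rw [hσmd]; omega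
    have htail := star_tail_val hs hdne h0ne
    have ha0iw := key iw _ hiw htail
    have : iw = i1 := by
      by_contra hne
      exact (Set.disjoint_left.mp (hdis iw i1 hne) ha0iw) hi1
    rwa [this] at hiw
  -- lower bound on the out-degree of the hub in class i1
  have hge : s - 1 ≤ (Dg k s hs).dOut (f i1) ⟨s, Nat.lt_succ_self s⟩ := by
    have hgdef : ∀ w : ℕ, s * (k-1) + w % s < k * s :=
      fun w => idx_lt (by omega) (Nat.mod_lt _ hs)
    have hsub : (fun w : ℕ => (⟨s * (k-1) + w % s, hgdef w⟩ : Fin (k*s))) ''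
        ↑(Finset.Ico 1 s) ⊆
        {e ∈ f i1 | ((Dg k s hs).ends e).1 = ⟨s, Nat.lt_succ_self s⟩} := by
      rintro x ⟨w, hw, rfl⟩
      rw [Finset.coe_Ico, Set.mem_Ico] at hw
      have hmod : w % s = w := Nat.mod_eq_of_lt hw.2
      have hdv : (⟨s * (k-1) + w % s, hgdef w⟩ : Fin (k*s)).val / s = k - 1 :=
        idx_div hs (Nat.mod_lt _ hs)
      have hmd : (⟨s * (k-1) + w % s, hgdef w⟩ : Fin (k*s)).val % s = w % s :=
        idx_mod hs (Nat.mod_lt _ hs)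
      constructor
      · have hmem := hstar w hw.1 hw.2
        convert hmem using 2
        rw [hmod]
      · exact Fin.ext (star_tail_val hs (by rw [hdv]; omega) (by rw [hmd]; omega))
    have hinj : Set.InjOn (fun w : ℕ => (⟨s * (k-1) + w % s, hgdef w⟩ : Fin (k*s)))
        ↑(Finset.Ico 1 s) := by
      intro w hw w' hw' heq
      rw [Finset.coe_Ico, Set.mem_Ico] at hw hw'
      have := congrArg Fin.val heq
      simp only at this
      have h1 : w % s = w := Nat.mod_eq_of_lt hw.2
      have h2 : w' % s = w' := Nat.mod_eq_of_lt hw'.2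
      omega
    calc s - 1 = (Finset.Ico 1 s).card := (Nat.card_Ico 1 s).symm
      _ = (↑(Finset.Ico 1 s) : Set ℕ).ncard := (Set.ncard_coe_finset _).symm
      _ = ((fun w : ℕ => (⟨s * (k-1) + w % s, hgdef w⟩ : Fin (k*s))) ''
          ↑(Finset.Ico 1 s)).ncard := (Set.ncard_image_of_injOn hinj).symm
      _ ≤ {e ∈ f i1 | ((Dg k s hs).ends e).1 = ⟨s, Nat.lt_succ_self s⟩}.ncard :=
          Set.ncard_le_ncard hsub (Set.toFinite _)
      _ = (Dg k s hs).dOut (f i1) ⟨s, Nat.lt_succ_self s⟩ := rfl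
  -- the class of the top chain arc e0 has hub out-degree 0
  obtain ⟨j, hj⟩ := hcls (⟨s - 1, he0lt⟩ : Fin (k*s))
  have hdoutj : (Dg k s hs).dOut (f j) ⟨s, Nat.lt_succ_self s⟩ = 0 := by
    have hempty : {e ∈ f j | ((Dg k s hs).ends e).1 = ⟨s, Nat.lt_succ_self s⟩} = ∅ := by
      ext e'
      simp only [Set.mem_setOf_eq, Set.mem_empty_iff_false, iff_false, not_and]
      intro he' ht'
      exact no_out_of_hub hs hs3 (harb j) hj hende0T
        (by rw [hende0H]) he' (by rw [ht'])
    rw [Multidigraph.dOut, hempty, Set.ncard_empty]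
  have hne : i1 ≠ j := by
    intro hii
    rw [hii] at hi1
    have heq : (⟨s - 1, he0lt⟩ : Fin (k*s)) = ⟨s * (k-1), ha0lt⟩ :=
      in_arc_unique hs (harb j) hub_ne hj hi1 hende0H ha0H
    have := congrArg Fin.val heq
    simp only at this
    have : s ≤ s * (k-1) := Nat.le_mul_of_pos_right s (by omega)
    omega
  refine ⟨i1, j, hne, ⟨s, Nat.lt_succ_self s⟩, ?_⟩
  rw [hdoutj]
  push_cast
  rw [sub_zero, abs_of_nonneg (by positivity)]
  omega

end Basic




end ArbCex

/-- **Theorem (Statement 17).** For every `k ≥ 2` and `c > 0` there is a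
finite digraph which is the arc-disjoint union of `k` spanning arborescences
such that in every decomposition into `k` spanning arborescences some two
parts have out-degrees differing by more than `c` at some vertex. -/
theorem arborescence_decompositions_unbalanced (k : ℕ) (hk : 2 ≤ k)
    (c : ℕ) (hc : 0 < c) :
    ∃ (n m : ℕ) (D : Multidigraph (Fin n) (Fin m)),
      (∃ f : Fin k → Set (Fin m), (⋃ i, f i) = Set.univ ∧
        (∀ i j, i ≠ j → Disjoint (f i) (f j)) ∧
        ∀ i, D.IsArborescence (f i)) ∧
      ∀ f : Fin k → Set (Fin m), (⋃ i, f i) = Set.univ →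
        (∀ i j, i ≠ j → Disjoint (f i) (f j)) →
        (∀ i, D.IsArborescence (f i)) →
        ∃ i j, i ≠ j ∧ ∃ v : Fin n,
          (c : ℤ) < |(D.dOut (f i) v : ℤ) - (D.dOut (f j) v : ℤ)| := by
  have hs : 0 < c + 2 := by omega
  refine ⟨(c+2)+1, k*(c+2), ArbCex.Dg k (c+2) hs,
    ArbCex.exists_decomposition hs hk, ?_⟩
  intro f hcov hdis harb
  obtain ⟨i, j, hij, v, hv⟩ :=
    ArbCex.forced_unbalanced hs (by omega) hk f hcov hdis harb
  refine ⟨i, j, hij, v, ?_⟩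
  push_cast at hv
  linarith
end

section
/- For every integer k ≥ 2 and every constant c > 0, there exists a finite digraph D that is the arc-disjoint union of k strongly connected spanning subdigraphs, such that for every decomposition of the arcs of D into k strongly connected spanning subdigraphs S1, ..., Sk there exist distinct indices i, j and a vertex v with |d^out_{Si}(v) - d^out_{Sj}(v)| > c. -/
/-!
The digraph has a hub `h` and, for `t = 0, …, N`, two vertices `u t`, `w t`, with arcs
`h → w t`, `w t → u t`, `K` parallel arcs `u t → w t`, `K` parallel links into `u t` from the
previous vertex (`h` for `t = 0`, `w (t - 1)` otherwise), `K + 1` arcs `u t → h` and `K` arcs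
`w N → h`. Entering `{u t, w t}`, entering `u t` and leaving `w t` (`t < N`) are cuts of exactly
`K + 1` arcs each, so each of the `K + 1` strongly connected parts uses exactly one arc of each.
The part containing `h → w 0` has no link into `u 0` (both lie in the first cut), so it enters
`u 0` through `w 0 → u 0`; that arc also leaves `w 0`, so the part has no link into `u 1` and
enters `{u 1, w 1}` through `h → w 1`, and so on. Hence it owns all `N + 1` arcs `h → w t`,
while every other part has at most one arc leaving `h`, a link into `u 0`.
-/

open Function Set

namespace Multidigraph

variable {V E V' E' ι : Type*}

def IsStrongDecomposition (D : Multidigraph V E) (f : ι → Set E) : Prop :=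
  (⋃ i, f i) = univ ∧ (∀ i j, i ≠ j → Disjoint (f i) (f j)) ∧
    ∀ i, D.StronglyConnected (f i)

variable {D : Multidigraph V E} {S : Set E}

theorem reach_of_mem {e : E} (he : e ∈ S) : D.Reach S (D.ends e).1 (D.ends e).2 :=
  .single ⟨e, he, rfl⟩

theorem stronglyConnected_of_reach_of_reach (r : V) (hto : ∀ a, D.Reach S a r)
    (hfrom : ∀ b, D.Reach S r b) : D.StronglyConnected S :=
  fun a b => (hto a).trans (hfrom b)

theorem Reach.exists_mem_crossing {U : Set V} {a b : V} (h : D.Reach S a b) (ha : a ∉ U)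
    (hb : b ∈ U) : ∃ e ∈ S, (D.ends e).1 ∉ U ∧ (D.ends e).2 ∈ U := by
  induction h with
  | refl => exact absurd hb ha
  | @tail c d _ hcd ih =>
    by_cases hc : c ∈ U
    · exact ih hc
    · obtain ⟨e, he, hed⟩ := hcd
      exact ⟨e, he, by rwa [hed], by rwa [hed]⟩

theorem Reach.map {D' : Multidigraph V' E'} (φ : V → V') (ψ : E → E')
    (hψ : ∀ e, D'.ends (ψ e) = Prod.map φ φ (D.ends e)) {a b : V} (h : D.Reach S a b) :
    D'.Reach (ψ '' S) (φ a) (φ b) :=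
  Relation.ReflTransGen.lift φ
    (fun _ _ ⟨e, he, hed⟩ => ⟨ψ e, mem_image_of_mem ψ he, by rw [hψ, hed]; rfl⟩) _ _ h

def relabel (D : Multidigraph V E) (eV : V ≃ V') (eE : E ≃ E') : Multidigraph V' E' :=
  ⟨fun e => Prod.map eV eV (D.ends (eE.symm e))⟩

variable (eV : V ≃ V') (eE : E ≃ E')

theorem reach_relabel {S : Set E'} {a b : V'} :
    (D.relabel eV eE).Reach S a b ↔ D.Reach (eE ⁻¹' S) (eV.symm a) (eV.symm b) := by
  constructor
  · intro h
    simpa [eE.image_symm_eq_preimage] using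
      h.map eV.symm eE.symm fun e => by simp [relabel, Prod.map_map]
  · intro h
    simpa [eE.image_preimage] using h.map eV eE (fun e => by simp [relabel])

theorem stronglyConnected_relabel {S : Set E'} :
    (D.relabel eV eE).StronglyConnected S ↔ D.StronglyConnected (eE ⁻¹' S) := by
  simp only [StronglyConnected, reach_relabel]
  exact ⟨fun h a b => by simpa using h (eV a) (eV b), fun h a b => h _ _⟩

theorem dOut_relabel (S : Set E') (v : V) :
    (D.relabel eV eE).dOut S (eV v) = D.dOut (eE ⁻¹' S) v := by
  have : {e ∈ S | ((D.relabel eV eE).ends e).1 = eV v} =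
      eE '' {e ∈ eE ⁻¹' S | (D.ends e).1 = v} := by
    ext e
    simp [relabel]
  rw [dOut, dOut, this, ncard_image_of_injective _ eE.injective]

theorem isStrongDecomposition_relabel {f : ι → Set E'} :
    (D.relabel eV eE).IsStrongDecomposition f ↔
      D.IsStrongDecomposition fun i => eE ⁻¹' f i := by
  simp only [IsStrongDecomposition, stronglyConnected_relabel, disjoint_preimage_iff eE.surjective,
    ← preimage_iUnion, ← preimage_univ (f := eE), (preimage_injective.2 eE.surjective).eq_iff]

end Multidigraph

theorem eq_of_forall_exists_mem_of_pairwise_disjoint {ι α : Type*} [Finite ι] {f : ι → Set α}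
    (hf : Pairwise (Disjoint on f)) {ψ : ι → α} (hψ : ∀ i, ∃ j, ψ j ∈ f i)
    {i j j' : ι} (hj : ψ j ∈ f i) (hj' : ψ j' ∈ f i) : j = j' := by
  have eq_of_mem : ∀ {a i i'}, a ∈ f i → a ∈ f i' → i = i' := fun ha ha' =>
    by_contra fun hne => disjoint_left.1 (hf hne) ha ha'
  choose σ hσ using hψ
  have hσ_surj : Surjective σ :=
    Finite.surjective_of_injective fun i i' h => eq_of_mem (hσ i) (h ▸ hσ i')
  obtain ⟨a, rfl⟩ := hσ_surj j
  obtain ⟨a', rfl⟩ := hσ_surj j'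
  rw [eq_of_mem (hσ a) hj, eq_of_mem (hσ a') hj']

theorem eq_of_cons_mem_of_pairwise_disjoint {α : Type*} {K : ℕ} {f : Fin (K + 1) → Set α}
    (hf : Pairwise (Disjoint on f)) {x : α} {y : Fin K → α}
    (hxy : ∀ i, x ∈ f i ∨ ∃ j, y j ∈ f i)
    {i a b : Fin (K + 1)} (ha : (Fin.cons x y : Fin (K + 1) → α) a ∈ f i)
    (hb : (Fin.cons x y : Fin (K + 1) → α) b ∈ f i) : a = b :=
  eq_of_forall_exists_mem_of_pairwise_disjoint hf
    (fun i => (hxy i).elim (⟨0, ·⟩) fun ⟨j, h⟩ => ⟨j.succ, h⟩) ha hb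

namespace Gadget

inductive Vertex (N : ℕ) : Type
  | hub
  | u (t : Fin (N + 1))
  | w (t : Fin (N + 1))
  deriving DecidableEq, Fintype

variable {N K : ℕ}

open Vertex

def prev : Fin (N + 1) → Vertex N := Fin.cases hub fun t => w t.castSucc

@[simp] theorem prev_zero : prev (0 : Fin (N + 1)) = hub := rfl

@[simp] theorem prev_succ (t : Fin N) : prev t.succ = w t.castSucc := rfl

theorem prev_eq_hub_iff {t : Fin (N + 1)} : prev t = hub ↔ t = 0 := by
  cases t using Fin.cases <;> simp [Fin.succ_ne_zero]

theorem prev_eq_w_castSucc_iff {t : Fin (N + 1)} {s : Fin N} :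
    prev t = w s.castSucc ↔ t = s.succ := by
  cases t using Fin.cases <;> simp [(Fin.succ_ne_zero _).symm]

inductive Arc (N K : ℕ) : Type
  | hubToW (t : Fin (N + 1))
  | prevToU (t : Fin (N + 1)) (i : Fin K)
  | wToU (t : Fin (N + 1))
  | uToW (t : Fin (N + 1)) (i : Fin K)
  | uToHub (t : Fin (N + 1)) (j : Fin (K + 1))
  | lastToHub (i : Fin K)
  deriving DecidableEq, Fintype

open Arc

def Arc.ends : Arc N K → Vertex N × Vertex N
  | hubToW t => (hub, w t)
  | prevToU t _ => (prev t, u t)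
  | wToU t => (w t, u t)
  | uToW t _ => (u t, w t)
  | uToHub t _ => (u t, hub)
  | lastToHub _ => (w (Fin.last N), hub)

def digraph (N K : ℕ) : Multidigraph (Vertex N) (Arc N K) := ⟨Arc.ends⟩

@[simp] theorem digraph_ends (x : Arc N K) : (digraph N K).ends x = x.ends := rfl

def Arc.part : Arc N K → Fin (K + 1)
  | hubToW _ | wToU _ => 0
  | prevToU _ i | uToW _ i | lastToHub i => i.succ
  | uToHub _ j => j

theorem eq_hubToW_or_prevToU_of_enter {t : Fin (N + 1)} {x : Arc N K}
    (htail : x.ends.1 ≠ u t ∧ x.ends.1 ≠ w t) (hhead : x.ends.2 = u t ∨ x.ends.2 = w t) :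
    x = hubToW t ∨ ∃ i, x = prevToU t i := by
  cases x <;> simp_all [Arc.ends]

theorem eq_wToU_or_prevToU_of_head_eq {t : Fin (N + 1)} {x : Arc N K} (h : x.ends.2 = u t) :
    x = wToU t ∨ ∃ i, x = prevToU t i := by
  cases x <;> simp_all [Arc.ends]

theorem eq_wToU_or_prevToU_of_tail_eq {s : Fin N} {x : Arc N K} (h : x.ends.1 = w s.castSucc) :
    x = wToU s.castSucc ∨ ∃ i, x = prevToU s.succ i := by
  cases x <;> simp_all [Arc.ends, prev_eq_w_castSucc_iff, (Fin.castSucc_ne_last s).symm]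

theorem eq_hubToW_or_prevToU_of_tail_eq_hub {x : Arc N K} (h : x.ends.1 = hub) :
    (∃ t, x = hubToW t) ∨ ∃ i, x = prevToU 0 i := by
  cases x <;> simp_all [Arc.ends, prev_eq_hub_iff]

open Multidigraph

theorem stronglyConnected_part_zero : (digraph N K).StronglyConnected {x | x.part = 0} := by
  have arc (x : Arc N K) (hx : x.part = 0) :
      (digraph N K).Reach {x | x.part = 0} x.ends.1 x.ends.2 :=
    reach_of_mem hx
  have u_hub (t : Fin (N + 1)) := arc (uToHub t 0) rfl
  have w_u (t : Fin (N + 1)) := arc (wToU t) rfl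
  have hub_w (t : Fin (N + 1)) := arc (hubToW t) rfl
  refine stronglyConnected_of_reach_of_reach hub (fun a => ?_) fun b => ?_
  · cases a with
    | hub => exact .refl
    | u t => exact u_hub t
    | w t => exact (w_u t).trans (u_hub t)
  · cases b with
    | hub => exact .refl
    | u t => exact (hub_w t).trans (w_u t)
    | w t => exact hub_w t

theorem stronglyConnected_part_succ (i : Fin K) :
    (digraph N K).StronglyConnected {x | x.part = i.succ} := by
  have arc (x : Arc N K) (hx : x.part = i.succ) :
      (digraph N K).Reach {x | x.part = i.succ} x.ends.1 x.ends.2 :=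
    reach_of_mem hx
  have u_hub (t : Fin (N + 1)) := arc (uToHub t i.succ) rfl
  have u_w (t : Fin (N + 1)) := arc (uToW t i) rfl
  have w_hub (t : Fin (N + 1)) : (digraph N K).Reach {x | x.part = i.succ} (w t) hub := by
    induction t using Fin.lastCases with
    | last => exact arc (lastToHub i) rfl
    | cast s => exact (arc (prevToU s.succ i) rfl).trans (u_hub s.succ)
  have hub_u (t : Fin (N + 1)) : (digraph N K).Reach {x | x.part = i.succ} hub (u t) := by
    induction t using Fin.induction with
    | zero => exact arc (prevToU 0 i) rfl
    | succ s ih => exact (ih.trans (u_w s.castSucc)).trans (arc (prevToU s.succ i) rfl)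
  refine stronglyConnected_of_reach_of_reach hub (fun a => ?_) fun b => ?_
  · cases a with
    | hub => exact .refl
    | u t => exact u_hub t
    | w t => exact w_hub t
  · cases b with
    | hub => exact .refl
    | u t => exact hub_u t
    | w t => exact (hub_u t).trans (u_w t)

theorem isStrongDecomposition_part :
    (digraph N K).IsStrongDecomposition fun j => {x : Arc N K | x.part = j} := by
  refine ⟨eq_univ_of_forall fun x => mem_iUnion.2 ⟨x.part, rfl⟩,
    fun i j hij => disjoint_left.2 fun x hi hj => hij (hi.symm.trans hj), fun j => ?_⟩
  cases j using Fin.cases with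
  | zero => exact stronglyConnected_part_zero
  | succ i => exact stronglyConnected_part_succ i

variable {S : Set (Arc N K)}

theorem hubToW_mem_or_prevToU_mem (hS : (digraph N K).StronglyConnected S) (t : Fin (N + 1)) :
    hubToW t ∈ S ∨ ∃ i, prevToU t i ∈ S := by
  obtain ⟨x, hx, htail, hhead⟩ := (hS hub (w t)).exists_mem_crossing
    (U := {v | v = u t ∨ v = w t}) (by simp) (by simp)
  rcases eq_hubToW_or_prevToU_of_enter (by simpa [not_or] using htail) (by simpa using hhead)
    with rfl | ⟨i, rfl⟩
  exacts [.inl hx, .inr ⟨i, hx⟩]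

theorem wToU_mem_or_prevToU_mem (hS : (digraph N K).StronglyConnected S) (t : Fin (N + 1)) :
    wToU t ∈ S ∨ ∃ i, prevToU t i ∈ S := by
  obtain ⟨x, hx, -, hhead⟩ := (hS hub (u t)).exists_mem_crossing (U := {u t}) (by simp) rfl
  rcases eq_wToU_or_prevToU_of_head_eq hhead with rfl | ⟨i, rfl⟩
  exacts [.inl hx, .inr ⟨i, hx⟩]

theorem wToU_castSucc_mem_or_prevToU_succ_mem (hS : (digraph N K).StronglyConnected S)
    (s : Fin N) : wToU s.castSucc ∈ S ∨ ∃ i, prevToU s.succ i ∈ S := by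
  obtain ⟨x, hx, htail, -⟩ := (hS (w s.castSucc) hub).exists_mem_crossing
    (U := {w s.castSucc}ᶜ) (by simp) (by simp)
  rcases eq_wToU_or_prevToU_of_tail_eq (by simpa using htail) with rfl | ⟨i, rfl⟩
  exacts [.inl hx, .inr ⟨i, hx⟩]

theorem hubToW_mem_of_hubToW_zero_mem {f : Fin (K + 1) → Set (Arc N K)}
    (hf : (digraph N K).IsStrongDecomposition f) {i : Fin (K + 1)} (h0 : hubToW 0 ∈ f i)
    (t : Fin (N + 1)) : hubToW t ∈ f i := by
  obtain ⟨-, hdisj, hconn⟩ := hf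
  have wToU_mem (t : Fin (N + 1)) (ht : hubToW t ∈ f i) : wToU t ∈ f i :=
    (wToU_mem_or_prevToU_mem (hconn i) t).resolve_right fun ⟨j, hj⟩ => Fin.succ_ne_zero j <|
      eq_of_cons_mem_of_pairwise_disjoint hdisj
        (fun i' => hubToW_mem_or_prevToU_mem (hconn i') t) hj ht
  induction t using Fin.induction with
  | zero => exact h0
  | succ s ih =>
    refine (hubToW_mem_or_prevToU_mem (hconn i) s.succ).resolve_right fun ⟨j, hj⟩ => ?_
    exact Fin.succ_ne_zero j <| eq_of_cons_mem_of_pairwise_disjoint hdisj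
      (fun i' => wToU_castSucc_mem_or_prevToU_succ_mem (hconn i') s) hj (wToU_mem _ ih)

theorem le_dOut_hub (h : ∀ t, hubToW t ∈ S) : N + 1 ≤ (digraph N K).dOut S hub :=
  calc N + 1 = (range (hubToW (N := N) (K := K))).ncard := by
        rw [ncard_range_of_injective fun _ _ => hubToW.inj, Nat.card_eq_fintype_card,
          Fintype.card_fin]
    _ ≤ _ := ncard_le_ncard (by rintro _ ⟨t, rfl⟩; exact ⟨h t, rfl⟩)

theorem dOut_hub_le_one (hS : ∀ t, hubToW t ∉ S)
    (huniq : ∀ i i', prevToU 0 i ∈ S → prevToU 0 i' ∈ S → i = i') :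
    (digraph N K).dOut S hub ≤ 1 := by
  rw [dOut, ncard_le_one_iff_subsingleton]
  rintro x ⟨hx, hxt⟩ y ⟨hy, hyt⟩
  rcases eq_hubToW_or_prevToU_of_tail_eq_hub hxt with ⟨t, rfl⟩ | ⟨i, rfl⟩
  · exact absurd hx (hS t)
  rcases eq_hubToW_or_prevToU_of_tail_eq_hub hyt with ⟨t, rfl⟩ | ⟨i', rfl⟩
  · exact absurd hy (hS t)
  rw [huniq i i' hx hy]

theorem exists_dOut_hub_unbalanced (hK : 0 < K) {f : Fin (K + 1) → Set (Arc N K)}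
    (hf : (digraph N K).IsStrongDecomposition f) :
    ∃ i j, i ≠ j ∧
      N + 1 ≤ (digraph N K).dOut (f i) hub ∧ (digraph N K).dOut (f j) hub ≤ 1 := by
  obtain ⟨i, hi⟩ := mem_iUnion.1 (hf.1 ▸ mem_univ (hubToW 0))
  have := Fin.nontrivial_iff_two_le.2 (Nat.succ_le_succ hK)
  obtain ⟨j, hji⟩ := exists_ne i
  have hall := hubToW_mem_of_hubToW_zero_mem hf hi
  refine ⟨i, j, hji.symm, le_dOut_hub hall,
    dOut_hub_le_one (fun t ht => disjoint_left.1 (hf.2.1 i j hji.symm) (hall t) ht) ?_⟩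
  exact fun a b ha hb => Fin.succ_injective _ <| eq_of_cons_mem_of_pairwise_disjoint hf.2.1
    (fun i' => hubToW_mem_or_prevToU_mem (hf.2.2 i') 0) ha hb

end Gadget

theorem strongly_connected_decompositions_unbalanced_general (k : ℕ) (hk : 2 ≤ k)
    (c : ℕ) :
    ∃ (n m : ℕ) (D : Multidigraph (Fin n) (Fin m)),
      (∃ f : Fin k → Set (Fin m), (⋃ i, f i) = Set.univ ∧
        (∀ i j, i ≠ j → Disjoint (f i) (f j)) ∧
        ∀ i, D.StronglyConnected (f i)) ∧
      ∀ f : Fin k → Set (Fin m), (⋃ i, f i) = Set.univ →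
        (∀ i j, i ≠ j → Disjoint (f i) (f j)) →
        (∀ i, D.StronglyConnected (f i)) →
        ∃ i j, i ≠ j ∧ ∃ v : Fin n,
          (c : ℤ) < |(D.dOut (f i) v : ℤ) - (D.dOut (f j) v : ℤ)| := by
  obtain ⟨K, rfl⟩ : ∃ K, k = K + 1 := ⟨k - 1, by omega⟩
  let eV := Fintype.equivFin (Gadget.Vertex (c + 1))
  let eE := Fintype.equivFin (Gadget.Arc (c + 1) K)
  refine ⟨_, _, (Gadget.digraph (c + 1) K).relabel eV eE,
    ⟨fun j => eE '' {x | x.part = j}, ?_⟩, fun f hu hd hs => ?_⟩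
  · refine (Multidigraph.isStrongDecomposition_relabel eV eE).2 ?_
    simpa only [Equiv.preimage_image] using Gadget.isStrongDecomposition_part
  · obtain ⟨i, j, hij, hi, hj⟩ := Gadget.exists_dOut_hub_unbalanced (by omega)
      ((Multidigraph.isStrongDecomposition_relabel eV eE).1 ⟨hu, hd, hs⟩)
    refine ⟨i, j, hij, eV .hub, ?_⟩
    rw [Multidigraph.dOut_relabel, Multidigraph.dOut_relabel]
    exact lt_abs.2 (.inl (by omega))

/-- **Theorem (Statement 18).** For every `k ≥ 2` and `c > 0` there is a
finite digraph which is the arc-disjoint union of `k` strongly connected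
spanning subdigraphs such that in every decomposition into `k` strongly
connected spanning subdigraphs some two parts have out-degrees differing by
more than `c` at some vertex. -/
theorem strongly_connected_decompositions_unbalanced (k : ℕ) (hk : 2 ≤ k)
    (c : ℕ) (hc : 0 < c) :
    ∃ (n m : ℕ) (D : Multidigraph (Fin n) (Fin m)),
      (∃ f : Fin k → Set (Fin m), (⋃ i, f i) = Set.univ ∧
        (∀ i j, i ≠ j → Disjoint (f i) (f j)) ∧
        ∀ i, D.StronglyConnected (f i)) ∧
      ∀ f : Fin k → Set (Fin m), (⋃ i, f i) = Set.univ →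
        (∀ i j, i ≠ j → Disjoint (f i) (f j)) →
        (∀ i, D.StronglyConnected (f i)) →
        ∃ i j, i ≠ j ∧ ∃ v : Fin n,
          (c : ℤ) < |(D.dOut (f i) v : ℤ) - (D.dOut (f j) v : ℤ)| :=
  strongly_connected_decompositions_unbalanced_general k hk c
end
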